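/- arXiv:math/0601761 — 9 statements merged into one kernel-verified Lean document; each statement's English description precedes it below -/
import Mathlib

section
/- Let A be a Leibniz algebra over a field, i.e. a vector space with a bilinear product ∘ satisfying (X∘Y)∘Z = X∘(Y∘Z) − Y∘(X∘Z). Let N : A → A be a linear map and define the contracted product X∘_N Y = N(X)∘Y + X∘N(Y) − N(X∘Y) and the Nijenhuis torsion Tor_N(X,Y) = N(X)∘N(Y) − N(X∘_N Y). If Tor_N vanishes identically, then ∘_N satisfies the Leibniz Jacobi identity (X∘_N Y)∘_N Z = X∘_N(Y∘_N Z) − Y∘_N(X∘_N Z). -/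
/-!
The Leibnizator of `∘_N` is homogeneous of degree two in `N`, and a direct expansion expresses it
as a combination of Leibnizators of `∘` (with `N` inserted in two arguments, in one argument and
then applied once more, or applied twice to the result) and of terms linear in the Nijenhuis
torsion. When `∘` is Leibniz and the torsion vanishes, every term of that combination vanishes.
-/

namespace LeibnizAlgebra

variable {R M : Type*} [CommSemiring R] [AddCommGroup M] [Module R M]

def leibnizator (μ : M →ₗ[R] M →ₗ[R] M) (X Y Z : M) : M :=
  μ (μ X Y) Z - μ X (μ Y Z) + μ Y (μ X Z)

theorem leibnizator_eq_zero_iff {μ : M →ₗ[R] M →ₗ[R] M} {X Y Z : M} :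
    leibnizator μ X Y Z = 0 ↔ μ (μ X Y) Z = μ X (μ Y Z) - μ Y (μ X Z) := by
  rw [leibnizator, sub_add, sub_eq_zero]

def contractedProduct (m : M →ₗ[R] M →ₗ[R] M) (N : M →ₗ[R] M) : M →ₗ[R] M →ₗ[R] M :=
  m ∘ₗ N + m.compl₂ N - m.compr₂ N

@[simp]
theorem contractedProduct_apply (m : M →ₗ[R] M →ₗ[R] M) (N : M →ₗ[R] M) (X Y : M) :
    contractedProduct m N X Y = m (N X) Y + m X (N Y) - N (m X Y) :=
  rfl

def nijenhuisTorsion (m : M →ₗ[R] M →ₗ[R] M) (N : M →ₗ[R] M) (X Y : M) : M :=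
  m (N X) (N Y) - N (contractedProduct m N X Y)

theorem leibnizator_contractedProduct (m : M →ₗ[R] M →ₗ[R] M) (N : M →ₗ[R] M) (X Y Z : M) :
    leibnizator (contractedProduct m N) X Y Z =
      leibnizator m (N X) (N Y) Z + leibnizator m (N X) Y (N Z) + leibnizator m X (N Y) (N Z)
      - N (leibnizator m (N X) Y Z + leibnizator m X (N Y) Z + leibnizator m X Y (N Z))
      + N (N (leibnizator m X Y Z))
      - (m (nijenhuisTorsion m N X Y) Z - m X (nijenhuisTorsion m N Y Z)
          + m Y (nijenhuisTorsion m N X Z))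
      - (nijenhuisTorsion m N (m X Y) Z - nijenhuisTorsion m N X (m Y Z)
          + nijenhuisTorsion m N Y (m X Z)) := by
  simp only [leibnizator, nijenhuisTorsion, contractedProduct_apply, map_add, map_sub,
    LinearMap.add_apply, LinearMap.sub_apply]
  abel

end LeibnizAlgebra

open LeibnizAlgebra

/-- If the Nijenhuis torsion of a linear map `N` on a Leibniz
algebra `(A, ∘)` vanishes, then the contracted product `∘_N` satisfies the
Leibniz Jacobi identity. -/
theorem leibniz_contracted_of_torsion_zero
    {K A : Type*} [Field K] [AddCommGroup A] [Module K A]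
    (m : A →ₗ[K] A →ₗ[K] A) (N : A →ₗ[K] A)
    (jacobi : ∀ X Y Z : A, m (m X Y) Z = m X (m Y Z) - m Y (m X Z))
    (cN : A → A → A)
    (hcN : ∀ X Y : A, cN X Y = m (N X) Y + m X (N Y) - N (m X Y))
    (torsion_zero : ∀ X Y : A, m (N X) (N Y) - N (cN X Y) = 0) :
    ∀ X Y Z : A, cN (cN X Y) Z = cN X (cN Y Z) - cN Y (cN X Z) := by
  obtain rfl : cN = fun X Y => contractedProduct m N X Y := funext fun X => funext (hcN X)
  have hm : ∀ X Y Z, leibnizator m X Y Z = 0 := fun X Y Z =>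
    leibnizator_eq_zero_iff.mpr (jacobi X Y Z)
  have hT : ∀ X Y, nijenhuisTorsion m N X Y = 0 := torsion_zero
  intro X Y Z
  rw [← leibnizator_eq_zero_iff, leibnizator_contractedProduct]
  simp only [hm, hT, map_zero, LinearMap.zero_apply, add_zero, sub_self]
end

section
/- Let A be a Leibniz algebra with product ∘ and let N : A → A be a linear map. Then the contracted product ∘_N satisfies the Leibniz Jacobi identity if and only if the Nijenhuis torsion Tor_N is a Leibniz 2-cocycle, i.e. for all X, Y, Z: Tor_N(X, Y∘Z) − Tor_N(X∘Y, Z) − Tor_N(Y, X∘Z) − Tor_N(X,Y)∘Z + X∘Tor_N(Y,Z) − Y∘Tor_N(X,Z) = 0. -/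
/-! The Leibniz coboundary of the Nijenhuis torsion is, identically, the Leibniz Jacobiator of
the contracted product `∘_N`: expanding both sides and rewriting every left-nested product
`(U ∘ V) ∘ W` by the Leibniz identity of `∘` makes them agree term by term. So one vanishes for
all arguments exactly when the other does. -/

section LeibnizNijenhuis

variable {R A : Type*} [CommRing R] [AddCommGroup A] [Module R A]
  (m : A →ₗ[R] A →ₗ[R] A) (N : A →ₗ[R] A)

def contractedProduct (X Y : A) : A :=
  m (N X) Y + m X (N Y) - N (m X Y)

def nijenhuisTorsion (X Y : A) : A :=
  m (N X) (N Y) - N (contractedProduct m N X Y)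

def leibnizCoboundary (T : A → A → A) (X Y Z : A) : A :=
  T X (m Y Z) - T (m X Y) Z - T Y (m X Z) - m (T X Y) Z + m X (T Y Z) - m Y (T X Z)

def leibnizJacobiator (μ : A → A → A) (X Y Z : A) : A :=
  μ (μ X Y) Z - (μ X (μ Y Z) - μ Y (μ X Z))

theorem leibnizCoboundary_nijenhuisTorsion
    (jacobi : ∀ X Y Z : A, m (m X Y) Z = m X (m Y Z) - m Y (m X Z)) (X Y Z : A) :
    leibnizCoboundary m (nijenhuisTorsion m N) X Y Z =
      leibnizJacobiator (contractedProduct m N) X Y Z := by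
  simp only [leibnizCoboundary, leibnizJacobiator, nijenhuisTorsion, contractedProduct, map_add,
    map_sub, LinearMap.add_apply, LinearMap.sub_apply, jacobi]
  abel

end LeibnizNijenhuis

/-- For a Leibniz algebra `(A, ∘)` and a linear map `N`, the
contracted product `∘_N` satisfies the Leibniz Jacobi identity if and only if
the Nijenhuis torsion of `N` is a Leibniz 2-cocycle. -/
theorem contracted_leibniz_iff_torsion_cocycle
    {K A : Type*} [Field K] [AddCommGroup A] [Module K A]
    (m : A →ₗ[K] A →ₗ[K] A) (N : A →ₗ[K] A)
    (jacobi : ∀ X Y Z : A, m (m X Y) Z = m X (m Y Z) - m Y (m X Z))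
    (cN : A → A → A)
    (hcN : ∀ X Y : A, cN X Y = m (N X) Y + m X (N Y) - N (m X Y))
    (Tor : A → A → A)
    (hTor : ∀ X Y : A, Tor X Y = m (N X) (N Y) - N (cN X Y)) :
    (∀ X Y Z : A, cN (cN X Y) Z = cN X (cN Y Z) - cN Y (cN X Z)) ↔
    (∀ X Y Z : A,
      Tor X (m Y Z) - Tor (m X Y) Z - Tor Y (m X Z)
        - m (Tor X Y) Z + m X (Tor Y Z) - m Y (Tor X Z) = 0) := by
  obtain rfl : cN = contractedProduct m N := funext₂ hcN
  obtain rfl : Tor = nijenhuisTorsion m N := funext₂ hTor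
  refine forall₃_congr fun X Y Z => ?_
  rw [← sub_eq_zero]
  exact Eq.congr_left (leibnizCoboundary_nijenhuisTorsion m N jacobi X Y Z).symm
end

section
/- Let A be a Leibniz algebra and N : A → A a linear map such that both ∘ and the contracted product ∘_N satisfy the Leibniz Jacobi identity. Then for every scalar λ the product X • Y = X∘_N Y + λ X∘Y also satisfies the Leibniz Jacobi identity (i.e. ∘_N and ∘ are compatible Leibniz products). -/
/-!
Write `J_μ(X, Y, Z) = μ(μ X Y) Z - μ X (μ Y Z) + μ Y (μ X Z)` for the Leibniz Jacobiator. Expanding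
by bilinearity, `J_{μ + λν} = J_μ + λ J_{μ,ν} + λ² J_ν` with a mixed Jacobiator `J_{μ,ν}`, so two
Leibniz products are compatible exactly when their mixed Jacobiator vanishes. For `μ = ∘_N` and
`ν = ∘` the mixed Jacobiator is the contraction of `J_∘` by `N`,
`J_∘(NX, Y, Z) + J_∘(X, NY, Z) + J_∘(X, Y, NZ) - N J_∘(X, Y, Z)`, which vanishes as `J_∘` does.
-/

namespace LinearMap

variable {R A : Type*} [CommRing R] [AddCommGroup A] [Module R A]

def leibnizJacobiator (μ : A →ₗ[R] A →ₗ[R] A) (X Y Z : A) : A :=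
  μ (μ X Y) Z - μ X (μ Y Z) + μ Y (μ X Z)

def mixedLeibnizJacobiator (μ ν : A →ₗ[R] A →ₗ[R] A) (X Y Z : A) : A :=
  μ (ν X Y) Z + ν (μ X Y) Z - μ X (ν Y Z) - ν X (μ Y Z) + μ Y (ν X Z) + ν Y (μ X Z)

theorem leibnizJacobiator_eq_zero_iff {μ : A →ₗ[R] A →ₗ[R] A} {X Y Z : A} :
    leibnizJacobiator μ X Y Z = 0 ↔ μ (μ X Y) Z = μ X (μ Y Z) - μ Y (μ X Z) := by
  rw [leibnizJacobiator, sub_add, sub_eq_zero]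

theorem leibnizJacobiator_add_smul (μ ν : A →ₗ[R] A →ₗ[R] A) (c : R) (X Y Z : A) :
    leibnizJacobiator (μ + c • ν) X Y Z =
      leibnizJacobiator μ X Y Z + c • mixedLeibnizJacobiator μ ν X Y Z
        + c ^ 2 • leibnizJacobiator ν X Y Z := by
  simp only [leibnizJacobiator, mixedLeibnizJacobiator, add_apply, smul_apply, map_add,
    map_smul]
  module

def contract (m : A →ₗ[R] A →ₗ[R] A) (N : A →ₗ[R] A) : A →ₗ[R] A →ₗ[R] A :=
  m.comp N + m.compl₂ N - m.compr₂ N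

@[simp]
theorem contract_apply (m : A →ₗ[R] A →ₗ[R] A) (N : A →ₗ[R] A) (X Y : A) :
    contract m N X Y = m (N X) Y + m X (N Y) - N (m X Y) :=
  rfl

theorem mixedLeibnizJacobiator_contract_left (m : A →ₗ[R] A →ₗ[R] A) (N : A →ₗ[R] A)
    (X Y Z : A) :
    mixedLeibnizJacobiator (contract m N) m X Y Z =
      leibnizJacobiator m (N X) Y Z + leibnizJacobiator m X (N Y) Z
        + leibnizJacobiator m X Y (N Z) - N (leibnizJacobiator m X Y Z) := by
  simp only [mixedLeibnizJacobiator, leibnizJacobiator, contract_apply, map_add, map_sub,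
    add_apply, sub_apply]
  abel

end LinearMap

/-- If both the Leibniz product `∘` and the contracted product
`∘_N` satisfy the Leibniz Jacobi identity, then for every scalar `λ` the
product `X • Y = X ∘_N Y + λ X ∘ Y` satisfies the Leibniz Jacobi identity,
i.e. `∘_N` and `∘` are compatible Leibniz products. -/
theorem contracted_compatible
    {A : Type*} [AddCommGroup A] [Module ℝ A]
    (m : A →ₗ[ℝ] A →ₗ[ℝ] A) (N : A →ₗ[ℝ] A)
    (jacobi : ∀ X Y Z : A, m (m X Y) Z = m X (m Y Z) - m Y (m X Z))
    (cN : A → A → A)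
    (hcN : ∀ X Y : A, cN X Y = m (N X) Y + m X (N Y) - N (m X Y))
    (jacobiN : ∀ X Y Z : A, cN (cN X Y) Z = cN X (cN Y Z) - cN Y (cN X Z)) :
    ∀ lam : ℝ, ∀ X Y Z : A,
      (fun (U V : A) => cN U V + lam • m U V) ((fun (U V : A) => cN U V + lam • m U V) X Y) Z
        = (fun (U V : A) => cN U V + lam • m U V) X ((fun (U V : A) => cN U V + lam • m U V) Y Z)
          - (fun (U V : A) => cN U V + lam • m U V) Y ((fun (U V : A) => cN U V + lam • m U V) X Z) := by
  intro lam X Y Z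
  obtain rfl : cN = fun U V => m.contract N U V := by
    funext U V
    rw [hcN, LinearMap.contract_apply]
  have hm (U V W : A) : m.leibnizJacobiator U V W = 0 :=
    LinearMap.leibnizJacobiator_eq_zero_iff.2 (jacobi U V W)
  have hmN : (m.contract N).leibnizJacobiator X Y Z = 0 :=
    LinearMap.leibnizJacobiator_eq_zero_iff.2 (jacobiN X Y Z)
  have hsum : (m.contract N + lam • m).leibnizJacobiator X Y Z = 0 := by
    rw [LinearMap.leibnizJacobiator_add_smul, LinearMap.mixedLeibnizJacobiator_contract_left, hmN]
    simp only [hm, map_zero, add_zero, sub_zero, smul_zero]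
  simpa only [LinearMap.add_apply, LinearMap.smul_apply] using
    LinearMap.leibnizJacobiator_eq_zero_iff.1 hsum
end

section
/- Let (A, ∘, ρ, ⟨·,·⟩) be a Courant algebroid and N an orthogonal (N* = −N) Courant-Nijenhuis tensor. Then N²(Y∘Y) = (N²Y)∘Y for all Y. -/
/-!
Since `N` is skew, `⟨NY, Y⟩ = 0` and `⟨N²Y, Y⟩ = -⟨NY, NY⟩`. By nondegeneracy the symmetrized
product `a ∘ b + b ∘ a` is determined by `⟨a, b⟩` (it pairs with `X` to `ρ(X)⟨a, b⟩`), so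
`NY ∘ Y + Y ∘ NY = 0` and `N²Y ∘ Y + Y ∘ N²Y = -2 NY ∘ NY`. With the first identity, the vanishing
torsion at `(Y, Y)` reads `N²(Y ∘ Y) = -NY ∘ NY`. Pairing the torsion at `(Y, X)` with `Y` and
moving the products across the invariant pairing gives `Y ∘ N²Y = -NY ∘ NY`. Hence
`N²Y ∘ Y = -NY ∘ NY = N²(Y ∘ Y)`.
-/

namespace CourantAlgebroid

variable {R A F : Type*} [CommRing R] [AddCommGroup A] [Module R A] [AddCommGroup F] [Module R F]
  {m : A →ₗ[R] A →ₗ[R] A} {B : A →ₗ[R] A →ₗ[R] F} {ρ : A →ₗ[R] F →ₗ[R] F} {N : A →ₗ[R] A}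

theorem eq_add_swap_of_apply_self_eq_two_smul [Invertible (2 : R)] {φ ψ : A →ₗ[R] A →ₗ[R] F}
    (hφ : ∀ b c, φ b c = φ c b) (h : ∀ Y, φ Y Y = (2 : R) • ψ Y Y) (b c : A) :
    φ b c = ψ b c + ψ c b := by
  have hbc := h (b + c)
  simp only [map_add, LinearMap.add_apply, h b, h c, hφ c b] at hbc
  refine (isUnit_of_invertible (2 : R)).smul_left_cancel.mp ?_
  linear_combination (norm := module) hbc

theorem anchor_pairing_eq_pairing_mul_add_swap [Invertible (2 : R)]
    (hsym : ∀ X Y, B X Y = B Y X) (h4 : ∀ X Y, ρ X (B Y Y) = (2 : R) • B X (m Y Y))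
    (a b c : A) : ρ a (B b c) = B a (m b c + m c b) := by
  rw [map_add]
  exact eq_add_swap_of_apply_self_eq_two_smul (φ := B.compr₂ (ρ a)) (ψ := m.compr₂ (B a))
    (fun b c => by simp only [LinearMap.compr₂_apply, hsym b c]) (h4 a) b c

theorem anchor_pairing_eq_mul_pairing_add_pairing_mul [Invertible (2 : R)]
    (hsym : ∀ X Y, B X Y = B Y X) (h5 : ∀ X Y, ρ X (B Y Y) = (2 : R) • B (m X Y) Y)
    (a b c : A) : ρ a (B b c) = B (m a b) c + B b (m a c) := by
  rw [hsym b (m a c)]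
  exact eq_add_swap_of_apply_self_eq_two_smul (φ := B.compr₂ (ρ a)) (ψ := B.comp (m a))
    (fun b c => by simp only [LinearMap.compr₂_apply, hsym b c]) (h5 a) b c

theorem eq_of_forall_pairing_eq (hnondeg : ∀ a : A, (∀ b : A, B a b = 0) → a = 0) {a a' : A}
    (h : ∀ X, B a X = B a' X) : a = a' :=
  sub_eq_zero.mp <| hnondeg _ fun X => by rw [map_sub, LinearMap.sub_apply, h, sub_self]

theorem mul_add_swap_eq_of_pairing_eq (hsym : ∀ X Y, B X Y = B Y X)
    (hnondeg : ∀ a : A, (∀ b : A, B a b = 0) → a = 0)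
    (hdiff : ∀ a b c, ρ a (B b c) = B a (m b c + m c b)) {b c b' c' : A} (h : B b c = B b' c') :
    m b c + m c b = m b' c' + m c' b' :=
  eq_of_forall_pairing_eq hnondeg fun X => by rw [hsym, ← hdiff, h, hdiff, hsym]

theorem pairing_apply_self_eq_zero [Invertible (2 : R)] (hsym : ∀ X Y, B X Y = B Y X)
    (horth : ∀ X Y, B (N X) Y = -B X (N Y)) (a : A) : B (N a) a = 0 := by
  have h := horth a a
  rw [hsym a] at h
  refine (isUnit_of_invertible (2 : R)).smul_left_cancel.mp ?_
  linear_combination (norm := module) h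

theorem sq_apply_mul_eq (htor : ∀ X Y, m (N X) (N Y) = N (m (N X) Y + m X (N Y) - N (m X Y)))
    (X Y : A) : N (N (m X Y)) = N (m (N X) Y + m X (N Y)) - m (N X) (N Y) := by
  rw [htor, map_sub, sub_sub_cancel]

theorem pairing_sq_apply_mul [Invertible (2 : R)] (hsym : ∀ X Y, B X Y = B Y X)
    (hdiff : ∀ a b c, ρ a (B b c) = B a (m b c + m c b))
    (hinv : ∀ a b c, ρ a (B b c) = B (m a b) c + B b (m a c))
    (horth : ∀ X Y, B (N X) Y = -B X (N Y))
    (htor : ∀ X Y, m (N X) (N Y) = N (m (N X) Y + m X (N Y) - N (m X Y))) (X Y : A) :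
    B (N (N (m Y X))) Y = ρ Y (B X (N (N Y))) + B X (m (N Y) (N Y)) := by
  have hpair : B (N (N (m Y X))) Y =
      -(B (m (N Y) X) (N Y) + B (m Y (N X)) (N Y)) - B (m (N Y) (N X)) Y := by
    rw [sq_apply_mul_eq htor, map_sub, LinearMap.sub_apply, horth, map_add, LinearMap.add_apply]
  have e1 := hinv (N Y) X (N Y)
  have e2 := hinv Y (N X) (N Y)
  have e3 := hinv (N Y) (N X) Y
  have hskew : ρ (N Y) (B X (N Y)) + ρ (N Y) (B (N X) Y) = 0 := by
    rw [horth X Y, map_neg, add_neg_cancel]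
  have hgrad : B (N X) (m (N Y) Y + m Y (N Y)) = 0 := by
    rw [← hdiff, pairing_apply_self_eq_zero hsym horth, map_zero]
  rw [horth X (N Y), map_neg] at e2
  rw [map_add] at hgrad
  linear_combination (norm := module) hpair + e1 + e2 + e3 - hskew + hgrad

theorem sq_apply_mul_self [Invertible (2 : R)] (hsym : ∀ X Y, B X Y = B Y X)
    (hnondeg : ∀ a : A, (∀ b : A, B a b = 0) → a = 0)
    (hdiff : ∀ a b c, ρ a (B b c) = B a (m b c + m c b))
    (horth : ∀ X Y, B (N X) Y = -B X (N Y))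
    (htor : ∀ X Y, m (N X) (N Y) = N (m (N X) Y + m X (N Y) - N (m X Y))) (Y : A) :
    N (N (m Y Y)) = -m (N Y) (N Y) := by
  have hgrad : m (N Y) Y + m Y (N Y) = m 0 0 + m 0 0 :=
    mul_add_swap_eq_of_pairing_eq hsym hnondeg hdiff <| by
      rw [pairing_apply_self_eq_zero hsym horth, map_zero]
  rw [sq_apply_mul_eq htor, hgrad, map_zero, add_zero, map_zero, zero_sub]

theorem mul_sq_apply_self [Invertible (2 : R)] (hsym : ∀ X Y, B X Y = B Y X)
    (hnondeg : ∀ a : A, (∀ b : A, B a b = 0) → a = 0)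
    (hdiff : ∀ a b c, ρ a (B b c) = B a (m b c + m c b))
    (hinv : ∀ a b c, ρ a (B b c) = B (m a b) c + B b (m a c))
    (horth : ∀ X Y, B (N X) Y = -B X (N Y))
    (htor : ∀ X Y, m (N X) (N Y) = N (m (N X) Y + m X (N Y) - N (m X Y))) (Y : A) :
    m Y (N (N Y)) = -m (N Y) (N Y) := by
  refine eq_of_forall_pairing_eq hnondeg fun X => ?_
  have h := hinv Y (N (N Y)) X
  rw [horth (N Y) (m Y X), horth Y (N (m Y X)), neg_neg, hsym Y (N (N (m Y X))),
    pairing_sq_apply_mul hsym hdiff hinv horth htor, hsym (N (N Y)) X] at h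
  rw [map_neg, LinearMap.neg_apply, hsym (m (N Y) (N Y)) X]
  linear_combination (norm := module) -h

theorem sq_apply_mul_add_mul_sq_apply (hsym : ∀ X Y, B X Y = B Y X)
    (hnondeg : ∀ a : A, (∀ b : A, B a b = 0) → a = 0)
    (hdiff : ∀ a b c, ρ a (B b c) = B a (m b c + m c b))
    (horth : ∀ X Y, B (N X) Y = -B X (N Y)) (Y : A) :
    m (N (N Y)) Y + m Y (N (N Y)) = -(m (N Y) (N Y) + m (N Y) (N Y)) := by
  have h := mul_add_swap_eq_of_pairing_eq hsym hnondeg hdiff (b := N (N Y)) (c := Y)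
    (b' := -N Y) (c' := N Y) (by rw [horth, map_neg, LinearMap.neg_apply])
  rw [h, map_neg, LinearMap.neg_apply, map_neg, neg_add]

end CourantAlgebroid

open CourantAlgebroid

theorem nsq_square_of_orthogonal_nijenhuis_general
    {A F : Type*} [AddCommGroup A] [Module ℝ A] [AddCommGroup F] [Module ℝ F]
    (m : A →ₗ[ℝ] A →ₗ[ℝ] A)           -- the Leibniz product ∘
    (B : A →ₗ[ℝ] A →ₗ[ℝ] F)           -- the pairing ⟨·,·⟩
    (ρ : A →ₗ[ℝ] F →ₗ[ℝ] F)           -- the anchor acting on scalars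
    (hsym : ∀ X Y : A, B X Y = B Y X)
    (hnondeg : ∀ a : A, (∀ b : A, B a b = 0) → a = 0)
    (h4 : ∀ X Y : A, ρ X (B Y Y) = (2 : ℝ) • B X (m Y Y))
    (h5 : ∀ X Y : A, ρ X (B Y Y) = (2 : ℝ) • B (m X Y) Y)
    (N : A →ₗ[ℝ] A)
    (horth : ∀ X Y : A, B (N X) Y = - B X (N Y))
    (cN : A → A → A)
    (hcN : ∀ X Y : A, cN X Y = m (N X) Y + m X (N Y) - N (m X Y))
    (torsion_zero : ∀ X Y : A, m (N X) (N Y) - N (cN X Y) = 0) :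
    ∀ Y : A, N (N (m Y Y)) = m (N (N Y)) Y := by
  intro Y
  have hdiff := anchor_pairing_eq_pairing_mul_add_swap hsym h4
  have hinv := anchor_pairing_eq_mul_pairing_add_pairing_mul hsym h5
  have htor : ∀ X Y, m (N X) (N Y) = N (m (N X) Y + m X (N Y) - N (m X Y)) := fun X Y =>
    hcN X Y ▸ sub_eq_zero.mp (torsion_zero X Y)
  rw [sq_apply_mul_self hsym hnondeg hdiff horth htor]
  linear_combination (norm := module) mul_sq_apply_self hsym hnondeg hdiff hinv horth htor Y
    - sq_apply_mul_add_mul_sq_apply hsym hnondeg hdiff horth Y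

/-- On a Courant algebroid, if `N` is an orthogonal (`N* = -N`)
Courant-Nijenhuis tensor (vanishing Nijenhuis torsion), then
`N²(Y∘Y) = (N²Y)∘Y` for all `Y`. -/
theorem nsq_square_of_orthogonal_nijenhuis
    {A F : Type*} [AddCommGroup A] [Module ℝ A] [AddCommGroup F] [Module ℝ F]
    (m : A →ₗ[ℝ] A →ₗ[ℝ] A)           -- the Leibniz product ∘
    (B : A →ₗ[ℝ] A →ₗ[ℝ] F)           -- the pairing ⟨·,·⟩
    (ρ : A →ₗ[ℝ] F →ₗ[ℝ] F)           -- the anchor acting on scalars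
    (jacobi : ∀ X Y Z : A, m (m X Y) Z = m X (m Y Z) - m Y (m X Z))
    (hsym : ∀ X Y : A, B X Y = B Y X)
    (hnondeg : ∀ a : A, (∀ b : A, B a b = 0) → a = 0)
    (h4 : ∀ X Y : A, ρ X (B Y Y) = (2 : ℝ) • B X (m Y Y))
    (h5 : ∀ X Y : A, ρ X (B Y Y) = (2 : ℝ) • B (m X Y) Y)
    (N : A →ₗ[ℝ] A)
    (horth : ∀ X Y : A, B (N X) Y = - B X (N Y))
    (cN : A → A → A)
    (hcN : ∀ X Y : A, cN X Y = m (N X) Y + m X (N Y) - N (m X Y))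
    (torsion_zero : ∀ X Y : A, m (N X) (N Y) - N (cN X Y) = 0) :
    ∀ Y : A, N (N (m Y Y)) = m (N (N Y)) Y :=
  nsq_square_of_orthogonal_nijenhuis_general m B ρ hsym hnondeg h4 h5 N horth cN hcN torsion_zero
end

section
/- Let (A, ∘, ρ, ⟨·,·⟩) be an irreducible Courant algebroid, meaning the only (1,1)-tensors Δ with X∘ΔZ = Δ(X∘Z) and Δ(Y∘Y) = ΔY∘Y for all X,Y,Z are the scalar multiples of the identity. Then every Courant-Nijenhuis tensor N on A satisfies N + N* = λI and N² − λN + γI = 0 for some scalars λ, γ. -/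
/-!
Write `T_X = ⁅L_X, N⁆` for the commutator of `N` with left multiplication by `X`. Comparing the
anchor axioms of `∘` with those of the deformed product `∘_N` shows that `T_X` is skew for the
pairing and that `Δ = N + N*` commutes with every `L_X` and satisfies `Δ(Y∘Y) = ΔY∘Y`, so
`Δ = λ` by irreducibility. Shifting by `λ/2` keeps `N` Courant-Nijenhuis and makes it
skew-adjoint. For a skew Courant-Nijenhuis tensor, vanishing torsion reads `T_{NX} = N T_X`,
which together with skewness of `T_X` gives `T_X N = -N T_X`; hence `N²` commutes with every
`L_X` and with squaring, and irreducibility makes `(N - λ/2)²` a scalar.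
-/

open LinearMap (IsAdjointPair)

namespace CourantAlgebroid

section Polarization

variable {R M P : Type*} [CommRing R] [AddCommGroup M] [Module R M] [AddCommGroup P] [Module R P]

theorem add_flip_eq_of_apply_self_eq {f g : M →ₗ[R] M →ₗ[R] P} (h : ∀ x, f x x = g x x)
    (a b : M) : f a b + f b a = g a b + g b a := by
  have hab := h (a + b)
  simp only [map_add, LinearMap.add_apply, h a, h b] at hab
  linear_combination (norm := abel) hab

end Polarization

variable {R A F : Type*} [CommRing R] [AddCommGroup A] [Module R A] [AddCommGroup F] [Module R F]

def deformedProduct (m : A →ₗ[R] A →ₗ[R] A) (N : Module.End R A) : A →ₗ[R] A →ₗ[R] A :=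
  m ∘ₗ N + m.compl₂ N - m.compr₂ N

theorem deformedProduct_apply (m : A →ₗ[R] A →ₗ[R] A) (N : Module.End R A) (X : A) :
    deformedProduct m N X = m (N X) + ⁅m X, N⁆ := by
  ext Y
  simp only [deformedProduct, LieRing.of_associative_ring_bracket, LinearMap.sub_apply,
    LinearMap.add_apply, LinearMap.comp_apply, LinearMap.compl₂_apply, LinearMap.compr₂_apply,
    Module.End.mul_apply]
  abel

@[simp]
theorem deformedProduct_apply_apply (m : A →ₗ[R] A →ₗ[R] A) (N : Module.End R A) (X Y : A) :
    deformedProduct m N X Y = m (N X) Y + m X (N Y) - N (m X Y) := rfl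

theorem deformedProduct_sub_smul_one (m : A →ₗ[R] A →ₗ[R] A) (N : Module.End R A) (c : R) :
    deformedProduct m (N - c • 1) = deformedProduct m N - c • m := by
  ext X Y
  simp only [deformedProduct_apply_apply, LinearMap.sub_apply, LinearMap.smul_apply,
    Module.End.one_apply, map_sub, map_smul]
  module

structure CourantAxioms (m : A →ₗ[R] A →ₗ[R] A) (B : A →ₗ[R] A →ₗ[R] F)
    (ρ : A →ₗ[R] F →ₗ[R] F) : Prop where
  anchor_pairing_self : ∀ X Y, ρ X (B Y Y) = (2 : R) • B X (m Y Y)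
  anchor_pairing_self' : ∀ X Y, ρ X (B Y Y) = (2 : R) • B (m X Y) Y

/-- `map_mul_map` is the vanishing of the Nijenhuis torsion of `N`. -/
structure IsCourantNijenhuis (m : A →ₗ[R] A →ₗ[R] A) (B : A →ₗ[R] A →ₗ[R] F)
    (ρ : A →ₗ[R] F →ₗ[R] F) (N : Module.End R A) : Prop where
  map_mul_map : ∀ X Y, m (N X) (N Y) = N (deformedProduct m N X Y)
  courantAxioms : CourantAxioms (deformedProduct m N) B (ρ ∘ₗ N)

def IsIrreducible (m : A →ₗ[R] A →ₗ[R] A) : Prop :=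
  ∀ Δ : Module.End R A, (∀ X Z, m X (Δ Z) = Δ (m X Z)) → (∀ Y, Δ (m Y Y) = m (Δ Y) Y) →
    ∃ c : R, ∀ x, Δ x = c • x

variable {m : A →ₗ[R] A →ₗ[R] A} {B : A →ₗ[R] A →ₗ[R] F} {ρ : A →ₗ[R] F →ₗ[R] F}

theorem eq_of_forall_pairing_eq_s9 (hsym : ∀ X Y, B X Y = B Y X) (hB : B.SeparatingLeft) {u v : A}
    (h : ∀ w, B w u = B w v) : u = v :=
  sub_eq_zero.1 <| hB _ fun w ↦ by rw [hsym, map_sub, h, sub_self]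

theorem eq_of_two_smul_eq [Invertible (2 : R)] {u v : F} (h : (2 : R) • u = (2 : R) • v) : u = v :=
  (isUnit_of_invertible (2 : R)).smul_left_cancel.1 h

namespace CourantAxioms

theorem sub_smul {m₁ m₂ : A →ₗ[R] A →ₗ[R] A} {ρ₁ ρ₂ : A →ₗ[R] F →ₗ[R] F}
    (h₁ : CourantAxioms m₁ B ρ₁) (h₂ : CourantAxioms m₂ B ρ₂) (c : R) :
    CourantAxioms (m₁ - c • m₂) B (ρ₁ - c • ρ₂) where
  anchor_pairing_self X Y := by
    simp only [LinearMap.sub_apply, LinearMap.smul_apply, h₁.1, h₂.1, map_sub, map_smul]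
    module
  anchor_pairing_self' X Y := by
    simp only [LinearMap.sub_apply, LinearMap.smul_apply, h₁.2, h₂.2, map_sub, map_smul]
    module

variable [Invertible (2 : R)]

theorem anchor_pairing (h : CourantAxioms m B ρ) (hsym : ∀ X Y, B X Y = B Y X) (X a b : A) :
    ρ X (B a b) = B X (m a b + m b a) := by
  have hpol := add_flip_eq_of_apply_self_eq (f := B.compr₂ (ρ X))
    (g := (2 : R) • m.compr₂ (B X)) (fun Y ↦ h.1 X Y) a b
  simp only [LinearMap.compr₂_apply, LinearMap.smul_apply, hsym b a, ← two_smul R, ← smul_add,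
    ← map_add] at hpol
  exact eq_of_two_smul_eq hpol

theorem anchor_pairing' (h : CourantAxioms m B ρ) (hsym : ∀ X Y, B X Y = B Y X) (X a b : A) :
    ρ X (B a b) = B (m X a) b + B a (m X b) := by
  have hpol := add_flip_eq_of_apply_self_eq (f := B.compr₂ (ρ X))
    (g := (2 : R) • B ∘ₗ m X) (fun Y ↦ h.2 X Y) a b
  simp only [LinearMap.compr₂_apply, LinearMap.smul_apply, LinearMap.comp_apply, hsym b a,
    hsym (m X b) a, ← two_smul R, ← smul_add] at hpol
  exact eq_of_two_smul_eq hpol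

theorem mul_add_mul_eq_of_pairing_eq (h : CourantAxioms m B ρ) (hsym : ∀ X Y, B X Y = B Y X)
    (hB : B.SeparatingLeft) {a b c d : A} (habcd : B a b = B c d) :
    m a b + m b a = m c d + m d c :=
  eq_of_forall_pairing_eq_s9 hsym hB fun X ↦ by
    rw [← h.anchor_pairing hsym, ← h.anchor_pairing hsym, habcd]

end CourantAxioms

theorem isAdjointPair_lie (hsym : ∀ X Y, B X Y = B Y X) {L f g : Module.End R A} {φ : F → F}
    (hL : ∀ a b, φ (B a b) = B (L a) b + B a (L b)) (hfg : IsAdjointPair B B f g) :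
    IsAdjointPair B B (⁅L, g⁆ : Module.End R A) (⁅L, f⁆ : Module.End R A) := by
  intro Z W
  have h₁ := hL (g Z) W
  have h₂ := hL Z (f W)
  rw [hsym (g Z) W, ← hfg, hsym (f W), hsym (g Z) (L W), ← hfg, hsym (f (L W))] at h₁
  simp only [LieRing.of_associative_ring_bracket, LinearMap.sub_apply, Module.End.mul_apply,
    map_sub]
  rw [hsym (g (L Z)), ← hfg, hsym _ (L Z)]
  linear_combination (norm := module) h₂ - h₁

namespace IsCourantNijenhuis

variable {N Ns : Module.End R A}

theorem sub_smul_one (hN : IsCourantNijenhuis m B ρ N) (hC : CourantAxioms m B ρ) (c : R) :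
    IsCourantNijenhuis m B ρ (N - c • 1) where
  map_mul_map X Y := by
    have h := hN.map_mul_map X Y
    simp only [deformedProduct_apply_apply, LinearMap.sub_apply, LinearMap.smul_apply,
      Module.End.one_apply, map_add, map_sub, map_smul] at h ⊢
    linear_combination (norm := module) h
  courantAxioms := by
    rw [deformedProduct_sub_smul_one, LinearMap.comp_sub, LinearMap.comp_smul,
      Module.End.one_eq_id, LinearMap.comp_id]
    exact hN.courantAxioms.sub_smul hC c

theorem lie_mul_map_eq_mul_lie (hN : IsCourantNijenhuis m B ρ N) (X : A) :
    ⁅m (N X), N⁆ = N * ⁅m X, N⁆ := by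
  ext Y
  have h := hN.map_mul_map X Y
  simp only [LieRing.of_associative_ring_bracket, LinearMap.sub_apply, Module.End.mul_apply,
    deformedProduct_apply_apply, map_sub, map_add] at h ⊢
  linear_combination (norm := module) h

variable [Invertible (2 : R)]

theorem pairing_lie_apply (hN : IsCourantNijenhuis m B ρ N) (hC : CourantAxioms m B ρ)
    (hsym : ∀ X Y, B X Y = B Y X) (X a b : A) :
    B (⁅m X, N⁆ a) b = -B a (⁅m X, N⁆ b) := by
  have h₁ := hN.courantAxioms.anchor_pairing' hsym X a b
  have h₂ := hC.anchor_pairing' hsym (N X) a b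
  simp only [deformedProduct_apply, LinearMap.comp_apply, LinearMap.add_apply,
    map_add] at h₁
  linear_combination (norm := module) h₂ - h₁

theorem deformedProduct_apply_self (hN : IsCourantNijenhuis m B ρ N) (hC : CourantAxioms m B ρ)
    (hsym : ∀ X Y, B X Y = B Y X) (hB : B.SeparatingLeft) (hadj : IsAdjointPair B B N Ns)
    (Y : A) : deformedProduct m N Y Y = Ns (m Y Y) :=
  eq_of_forall_pairing_eq_s9 hsym hB fun X ↦ eq_of_two_smul_eq <| by
    rw [← hN.courantAxioms.1, ← hadj, ← hC.1, LinearMap.comp_apply]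

theorem commute_add_adjoint (hN : IsCourantNijenhuis m B ρ N) (hC : CourantAxioms m B ρ)
    (hsym : ∀ X Y, B X Y = B Y X) (hB : B.SeparatingLeft) (hadj : IsAdjointPair B B N Ns)
    (X : A) : Commute (m X) (N + Ns) := by
  have hLie : IsAdjointPair B B (⁅m X, Ns⁆ : Module.End R A) (⁅m X, N⁆ : Module.End R A) :=
    isAdjointPair_lie hsym (hC.anchor_pairing' hsym X) hadj
  have hsum (Z : A) : ⁅m X, N⁆ Z + ⁅m X, Ns⁆ Z = 0 :=
    eq_of_forall_pairing_eq_s9 hsym hB fun W ↦ by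
      rw [map_add, hsym W, hsym W, hN.pairing_lie_apply hC hsym, hLie, map_zero, neg_add_cancel]
  ext Z
  have hZ := hsum Z
  simp only [LieRing.of_associative_ring_bracket, LinearMap.sub_apply, Module.End.mul_apply,
    LinearMap.add_apply, map_add] at hZ ⊢
  linear_combination (norm := module) hZ

theorem add_adjoint_apply_mul_self (hN : IsCourantNijenhuis m B ρ N) (hC : CourantAxioms m B ρ)
    (hsym : ∀ X Y, B X Y = B Y X) (hB : B.SeparatingLeft) (hadj : IsAdjointPair B B N Ns)
    (Y : A) : (N + Ns) (m Y Y) = m ((N + Ns) Y) Y := by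
  have hself := hN.deformedProduct_apply_self hC hsym hB hadj Y
  have hcomm := LinearMap.congr_fun (hN.commute_add_adjoint hC hsym hB hadj Y).eq Y
  have hsymm := hC.mul_add_mul_eq_of_pairing_eq hsym hB
    (show B (Ns Y) Y = B (N Y) Y by rw [hsym, ← hadj])
  simp only [deformedProduct_apply_apply, Module.End.mul_apply, LinearMap.add_apply,
    map_add] at hself hcomm ⊢
  linear_combination (norm := module) hcomm - hsymm - 2 • hself

theorem exists_add_adjoint_eq_smul (hN : IsCourantNijenhuis m B ρ N) (hC : CourantAxioms m B ρ)
    (hsym : ∀ X Y, B X Y = B Y X) (hB : B.SeparatingLeft) (hadj : IsAdjointPair B B N Ns)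
    (hirr : IsIrreducible m) : ∃ c : R, ∀ x, N x + Ns x = c • x :=
  hirr (N + Ns) (fun X Z ↦ LinearMap.congr_fun (hN.commute_add_adjoint hC hsym hB hadj X).eq Z)
    (hN.add_adjoint_apply_mul_self hC hsym hB hadj)

theorem lie_mul_mul_eq_neg (hN : IsCourantNijenhuis m B ρ N) (hC : CourantAxioms m B ρ)
    (hsym : ∀ X Y, B X Y = B Y X) (hB : B.SeparatingLeft) (hskew : IsAdjointPair B B N ⇑(-N))
    (X : A) : ⁅m X, N⁆ * N = -(N * ⁅m X, N⁆) := by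
  ext Z
  refine eq_of_forall_pairing_eq_s9 hsym hB fun W ↦ ?_
  calc B W ((⁅m X, N⁆ * N) Z) = B (⁅m X, N⁆ (N Z)) W := hsym _ _
    _ = -B (N Z) (⁅m X, N⁆ W) := hN.pairing_lie_apply hC hsym X _ _
    _ = B Z (N (⁅m X, N⁆ W)) := by rw [hskew, LinearMap.neg_apply, map_neg, neg_neg]
    _ = B Z (⁅m (N X), N⁆ W) := by rw [hN.lie_mul_map_eq_mul_lie, Module.End.mul_apply]
    _ = -B (⁅m (N X), N⁆ Z) W := by rw [hN.pairing_lie_apply hC hsym, neg_neg]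
    _ = B W ((-(N * ⁅m X, N⁆)) Z) := by
      rw [hN.lie_mul_map_eq_mul_lie, hsym, LinearMap.neg_apply, map_neg]

theorem commute_mul_self (hN : IsCourantNijenhuis m B ρ N) (hC : CourantAxioms m B ρ)
    (hsym : ∀ X Y, B X Y = B Y X) (hB : B.SeparatingLeft) (hskew : IsAdjointPair B B N ⇑(-N))
    (X : A) : Commute (m X) (N * N) := by
  have hanti := hN.lie_mul_mul_eq_neg hC hsym hB hskew X
  rw [LieRing.of_associative_ring_bracket] at hanti
  rw [commute_iff_lie_eq, LieRing.of_associative_ring_bracket]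
  calc m X * (N * N) - N * N * m X = (m X * N - N * m X) * N + N * (m X * N - N * m X) := by
        noncomm_ring
    _ = 0 := by rw [hanti, neg_add_cancel]

theorem map_mul_add_mul_map_eq_zero (hN : IsCourantNijenhuis m B ρ N) (hC : CourantAxioms m B ρ)
    (hsym : ∀ X Y, B X Y = B Y X) (hB : B.SeparatingLeft) (hskew : IsAdjointPair B B N ⇑(-N))
    (Y : A) : m (N Y) Y + m Y (N Y) = 0 := by
  have hself := hN.deformedProduct_apply_self hC hsym hB hskew Y
  rw [deformedProduct_apply_apply, LinearMap.neg_apply] at hself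
  linear_combination (norm := module) hself

theorem mul_self_apply_mul_self (hN : IsCourantNijenhuis m B ρ N) (hC : CourantAxioms m B ρ)
    (hsym : ∀ X Y, B X Y = B Y X) (hB : B.SeparatingLeft) (hskew : IsAdjointPair B B N ⇑(-N))
    (Y : A) : (N * N) (m Y Y) = m ((N * N) Y) Y := by
  have hzero := hN.map_mul_add_mul_map_eq_zero hC hsym hB hskew
  have hpol := add_flip_eq_of_apply_self_eq (f := m ∘ₗ N + m.compl₂ N) (g := 0)
    (fun Y ↦ hzero Y) Y (N Y)
  have htor := hN.map_mul_map Y Y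
  have hcomm := LinearMap.congr_fun (hN.commute_mul_self hC hsym hB hskew Y).eq Y
  simp only [LinearMap.add_apply, LinearMap.comp_apply, LinearMap.compl₂_apply,
    LinearMap.zero_apply, add_zero] at hpol
  simp only [deformedProduct_apply_apply, Module.End.mul_apply, map_sub, map_add] at htor hcomm ⊢
  have hN0 := congrArg N (hzero Y)
  rw [map_add, map_zero] at hN0
  linear_combination (norm := module) 2 • htor + hcomm + 2 • hN0 - hpol

theorem exists_mul_self_eq_smul (hN : IsCourantNijenhuis m B ρ N) (hC : CourantAxioms m B ρ)
    (hsym : ∀ X Y, B X Y = B Y X) (hB : B.SeparatingLeft) (hskew : IsAdjointPair B B N ⇑(-N))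
    (hirr : IsIrreducible m) : ∃ c : R, ∀ x, N (N x) = c • x :=
  hirr (N * N) (fun X Z ↦ LinearMap.congr_fun (hN.commute_mul_self hC hsym hB hskew X).eq Z)
    (hN.mul_self_apply_mul_self hC hsym hB hskew)

end IsCourantNijenhuis

end CourantAlgebroid

theorem irreducible_courant_nijenhuis_quadratic_general
    {A F : Type*} [AddCommGroup A] [Module ℝ A] [AddCommGroup F] [Module ℝ F]
    (m : A →ₗ[ℝ] A →ₗ[ℝ] A)           -- the Leibniz product ∘
    (B : A →ₗ[ℝ] A →ₗ[ℝ] F)           -- the pairing ⟨·,·⟩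
    (ρ : A →ₗ[ℝ] F →ₗ[ℝ] F)           -- the anchor acting on scalars
    (hsym : ∀ X Y : A, B X Y = B Y X)
    (hnondeg : ∀ a : A, (∀ b : A, B a b = 0) → a = 0)
    (h4 : ∀ X Y : A, ρ X (B Y Y) = (2 : ℝ) • B X (m Y Y))
    (h5 : ∀ X Y : A, ρ X (B Y Y) = (2 : ℝ) • B (m X Y) Y)
    -- irreducibility
    (hirr : ∀ Δ : A →ₗ[ℝ] A,
      (∀ X Z : A, m X (Δ Z) = Δ (m X Z)) → (∀ Y : A, Δ (m Y Y) = m (Δ Y) Y) →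
      ∃ c : ℝ, ∀ x : A, Δ x = c • x)
    -- N is a Courant-Nijenhuis tensor:
    (N Ns : A →ₗ[ℝ] A)
    (hadj : ∀ X Y : A, B (N X) Y = B X (Ns Y))
    (cN : A → A → A)
    (hcN : ∀ X Y : A, cN X Y = m (N X) Y + m X (N Y) - N (m X Y))
    (torsion_zero : ∀ X Y : A, m (N X) (N Y) - N (cN X Y) = 0)
    -- compatibility with the pairing: the contracted Courant axioms hold
    (hc4 : ∀ X Y : A, ρ (N X) (B Y Y) = (2 : ℝ) • B X (cN Y Y))
    (hc5 : ∀ X Y : A, ρ (N X) (B Y Y) = (2 : ℝ) • B (cN X Y) Y) :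
    ∃ lam gam : ℝ,
      (∀ x : A, N x + Ns x = lam • x) ∧
      (∀ x : A, N (N x) - lam • N x + gam • x = 0) := by
  have hC : CourantAlgebroid.CourantAxioms m B ρ := ⟨h4, h5⟩
  have hcN' (X Y : A) : cN X Y = CourantAlgebroid.deformedProduct m N X Y := hcN X Y
  have hN : CourantAlgebroid.IsCourantNijenhuis m B ρ N :=
    { map_mul_map X Y := by rw [← hcN']; exact sub_eq_zero.1 (torsion_zero X Y)
      courantAxioms :=
        ⟨fun X Y ↦ by rw [← hcN']; exact hc4 X Y, fun X Y ↦ by rw [← hcN']; exact hc5 X Y⟩ }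
  obtain ⟨lam, hlam⟩ := hN.exists_add_adjoint_eq_smul hC hsym hnondeg hadj hirr
  have hskew : LinearMap.IsAdjointPair B B ⇑(N - (lam / 2) • 1) ⇑(-(N - (lam / 2) • 1)) := by
    intro x y
    have hNs : Ns y = lam • y - N y := eq_sub_of_add_eq' (hlam y)
    simp only [LinearMap.neg_apply, LinearMap.sub_apply, LinearMap.smul_apply,
      Module.End.one_apply, map_neg, map_sub, map_smul, hadj x y, hNs]
    module
  obtain ⟨c, hc⟩ :=
    (hN.sub_smul_one hC (lam / 2)).exists_mul_self_eq_smul hC hsym hnondeg hskew hirr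
  refine ⟨lam, lam / 2 * (lam / 2) - c, hlam, fun x ↦ ?_⟩
  have hx := hc x
  simp only [LinearMap.sub_apply, LinearMap.smul_apply, Module.End.one_apply, map_sub,
    map_smul] at hx
  linear_combination (norm := module) hx

/-- On an irreducible Courant algebroid (the only (1,1)-tensors
`Δ` with `X∘ΔZ = Δ(X∘Z)` and `Δ(Y∘Y) = ΔY∘Y` are scalar multiples of the
identity), every Courant-Nijenhuis tensor `N` satisfies `N + N* = λI` and
`N² - λN + γI = 0` for some scalars `λ, γ`. -/
theorem irreducible_courant_nijenhuis_quadratic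
    {A F : Type*} [AddCommGroup A] [Module ℝ A] [AddCommGroup F] [Module ℝ F]
    (m : A →ₗ[ℝ] A →ₗ[ℝ] A)           -- the Leibniz product ∘
    (B : A →ₗ[ℝ] A →ₗ[ℝ] F)           -- the pairing ⟨·,·⟩
    (ρ : A →ₗ[ℝ] F →ₗ[ℝ] F)           -- the anchor acting on scalars
    (jacobi : ∀ X Y Z : A, m (m X Y) Z = m X (m Y Z) - m Y (m X Z))
    (hsym : ∀ X Y : A, B X Y = B Y X)
    (hnondeg : ∀ a : A, (∀ b : A, B a b = 0) → a = 0)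
    (h4 : ∀ X Y : A, ρ X (B Y Y) = (2 : ℝ) • B X (m Y Y))
    (h5 : ∀ X Y : A, ρ X (B Y Y) = (2 : ℝ) • B (m X Y) Y)
    -- irreducibility
    (hirr : ∀ Δ : A →ₗ[ℝ] A,
      (∀ X Z : A, m X (Δ Z) = Δ (m X Z)) → (∀ Y : A, Δ (m Y Y) = m (Δ Y) Y) →
      ∃ c : ℝ, ∀ x : A, Δ x = c • x)
    -- N is a Courant-Nijenhuis tensor:
    (N Ns : A →ₗ[ℝ] A)
    (hadj : ∀ X Y : A, B (N X) Y = B X (Ns Y))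
    (cN : A → A → A)
    (hcN : ∀ X Y : A, cN X Y = m (N X) Y + m X (N Y) - N (m X Y))
    (torsion_zero : ∀ X Y : A, m (N X) (N Y) - N (cN X Y) = 0)
    -- compatibility with the pairing: the contracted Courant axioms hold
    (hc4 : ∀ X Y : A, ρ (N X) (B Y Y) = (2 : ℝ) • B X (cN Y Y))
    (hc5 : ∀ X Y : A, ρ (N X) (B Y Y) = (2 : ℝ) • B (cN X Y) Y) :
    ∃ lam gam : ℝ,
      (∀ x : A, N x + Ns x = lam • x) ∧
      (∀ x : A, N (N x) - lam • N x + gam • x = 0) :=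
  irreducible_courant_nijenhuis_quadratic_general m B ρ hsym hnondeg h4 h5 hirr N Ns hadj cN hcN
    torsion_zero hc4 hc5
end

section
/- Let 𝒜 = ⊕_{k≥0} 𝒜^k be a ℤ-graded Poisson superalgebra whose Poisson bracket {·,·} has degree −2 (so {𝒜^a, 𝒜^b} ⊂ 𝒜^{a+b−2}) and is graded antisymmetric with parity given by degree, satisfying the graded Jacobi identity. Let Ψ ∈ 𝒜^3 be odd. For X, Y ∈ 𝒜^1 define X∘Y = {{X,Ψ},Y} and for f ∈ 𝒜^0 define ρ(X)(f) = {{X,Ψ},f}, and ⟨X,Y⟩ = {X,Y}. Then the derived bracket satisfies the Courant compatibility identities ρ(X)⟨Y,Y⟩ = 2⟨X, Y∘Y⟩ and ⟨X∘Y, Y⟩ = (1/2)ρ(X)⟨Y,Y⟩ for all X, Y ∈ 𝒜^1, without any assumption on {Ψ,Ψ}. -/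
/-!
Write `D_X = {X,Ψ}` and `f = {X,Y}`. Since `D_X` is even and `{D_X,Y}` is odd, the graded Jacobi
identity gives `{D_X,{Y,Y}} = 2{{D_X,Y},Y}`, which is the second identity. For the first, Jacobi
twice gives `{X,{D_Y,Y}} = {{D_X,Y},Y} + ({{f,Ψ},Y} + {D_Y,f})`, and the bracket in parentheses
vanishes: `f` has degree `0`, so `{f,Y} = 0` for degree reasons and Jacobi makes `{f,·}` pass
through `{Ψ,Y} = D_Y`.
-/

namespace GradedBracket

variable {A : Type*} [AddCommGroup A] [Module ℝ A] (G : ℕ → Submodule ℝ A) (P : A → A → A)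

def IsGradedAntisymm : Prop :=
  ∀ (a b : ℕ) (x y : A), x ∈ G a → y ∈ G b → P x y = -(((-1 : ℝ) ^ (a * b)) • P y x)

def IsGradedJacobi : Prop :=
  ∀ (a b : ℕ) (x y z : A), x ∈ G a → y ∈ G b →
    P x (P y z) = P (P x y) z + ((-1 : ℝ) ^ (a * b)) • P y (P x z)

variable {G P} {a b : ℕ} {x y z : A}

theorem symm_of_odd (hanti : IsGradedAntisymm G P) (hx : x ∈ G a) (hy : y ∈ G b)
    (hab : Odd (a * b)) : P x y = P y x := by
  rw [hanti a b x y hx hy, hab.neg_one_pow, neg_one_smul, neg_neg]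

theorem antisymm_of_even (hanti : IsGradedAntisymm G P) (hx : x ∈ G a) (hy : y ∈ G b)
    (hab : Even (a * b)) : P x y = -P y x := by
  rw [hanti a b x y hx hy, hab.neg_one_pow, one_smul]

theorem jacobi_of_even (hjac : IsGradedJacobi G P) (hx : x ∈ G a) (hy : y ∈ G b)
    (hab : Even (a * b)) : P x (P y z) = P (P x y) z + P y (P x z) := by
  rw [hjac a b x y z hx hy, hab.neg_one_pow, one_smul]

theorem jacobi_of_odd (hjac : IsGradedJacobi G P) (hx : x ∈ G a) (hy : y ∈ G b)
    (hab : Odd (a * b)) : P x (P y z) = P (P x y) z - P y (P x z) := by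
  rw [hjac a b x y z hx hy, hab.neg_one_pow, neg_one_smul, sub_eq_add_neg]

theorem bracket_bracket_self_eq_two_smul
    (hdeg : ∀ (a b : ℕ) (x y : A), x ∈ G a → y ∈ G b → P x y ∈ G (a + b - 2))
    (hanti : IsGradedAntisymm G P) (hjac : IsGradedJacobi G P)
    {D Y : A} (hD : D ∈ G 2) (hY : Y ∈ G 1) : P D (P Y Y) = (2 : ℝ) • P (P D Y) Y := by
  have hDY : P D Y ∈ G 1 := hdeg 2 1 D Y hD hY
  rw [jacobi_of_even hjac hD hY (by decide), ← symm_of_odd hanti hDY hY (by decide), two_smul]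

theorem bracket_bracket_of_mem_zero (hbil : ∀ x : A, IsLinearMap ℝ (P x))
    (hlow : ∀ (a b : ℕ) (x y : A), a + b < 2 → x ∈ G a → y ∈ G b → P x y = 0)
    (hjac : IsGradedJacobi G P) {f Ψ Y : A} (hf : f ∈ G 0) (hΨ : Ψ ∈ G b) (hY : Y ∈ G 1) :
    P (P f Ψ) Y = P f (P Ψ Y) := by
  have hfY : P f Y = 0 := hlow 0 1 f Y (by decide) hf hY
  rw [jacobi_of_even hjac hf hΨ (by simp), hfY, (hbil Ψ).map_zero, add_zero]

theorem bracket_derived_self_eq_derived_bracket_self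
    (hbilL : ∀ y : A, IsLinearMap ℝ (fun x => P x y))
    (hbilR : ∀ x : A, IsLinearMap ℝ (P x))
    (hdeg : ∀ (a b : ℕ) (x y : A), x ∈ G a → y ∈ G b → P x y ∈ G (a + b - 2))
    (hlow : ∀ (a b : ℕ) (x y : A), a + b < 2 → x ∈ G a → y ∈ G b → P x y = 0)
    (hanti : IsGradedAntisymm G P) (hjac : IsGradedJacobi G P)
    {X Y Ψ : A} (hX : X ∈ G 1) (hY : Y ∈ G 1) (hΨ : Ψ ∈ G 3) :
    P X (P (P Y Ψ) Y) = P (P (P X Ψ) Y) Y := by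
  have hXΨ : P X Ψ ∈ G 2 := hdeg 1 3 X Ψ hX hΨ
  have hYΨ : P Y Ψ ∈ G 2 := hdeg 1 3 Y Ψ hY hΨ
  have hXY : P X Y ∈ G 0 := hdeg 1 1 X Y hX hY
  have hX_YΨ : P X (P Y Ψ) = P (P X Y) Ψ + P (P X Ψ) Y := by
    rw [jacobi_of_odd hjac hX hY (by decide), antisymm_of_even hanti hY hXΨ (by decide),
      sub_neg_eq_add]
  have hcancel : P (P (P X Y) Ψ) Y + P (P Y Ψ) (P X Y) = 0 := by
    rw [bracket_bracket_of_mem_zero hbilR hlow hjac hXY hΨ hY,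
      ← symm_of_odd hanti hY hΨ (by decide), antisymm_of_even hanti hXY hYΨ (by decide),
      neg_add_cancel]
  rw [jacobi_of_even hjac hX hYΨ (by decide), hX_YΨ, (hbilL Y).map_add, add_right_comm,
    hcancel, zero_add]

end GradedBracket

/-- In an ℕ-graded Poisson superalgebra `𝒜 = ⊕_{k≥0} 𝒜^k` whose
bracket has degree `−2`, is graded antisymmetric and satisfies the graded
Jacobi identity, given an odd element `Ψ ∈ 𝒜³`, the derived bracket
`X∘Y = {{X,Ψ},Y}` together with `ρ(X)(f) = {{X,Ψ},f}` and `⟨X,Y⟩ = {X,Y}`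
satisfies the Courant compatibility identities
`ρ(X)⟨Y,Y⟩ = 2⟨X, Y∘Y⟩` and `⟨X∘Y, Y⟩ = (1/2)ρ(X)⟨Y,Y⟩`
for all `X, Y ∈ 𝒜¹`, without any assumption on `{Ψ,Ψ}`. -/
theorem derived_bracket_courant_compatibility
    {A : Type*} [AddCommGroup A] [Module ℝ A]
    (G : ℕ → Submodule ℝ A)                   -- the grading 𝒜^k
    (P : A → A → A)                            -- the Poisson bracket {·,·}
    (hbilL : ∀ y : A, IsLinearMap ℝ (fun x => P x y))
    (hbilR : ∀ x : A, IsLinearMap ℝ (P x))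
    (hdeg : ∀ (a b : ℕ) (x y : A), x ∈ G a → y ∈ G b → P x y ∈ G (a + b - 2))
    (hlow : ∀ (a b : ℕ) (x y : A), a + b < 2 → x ∈ G a → y ∈ G b → P x y = 0)
    (hanti : ∀ (a b : ℕ) (x y : A), x ∈ G a → y ∈ G b →
      P x y = -(((-1 : ℝ) ^ (a * b)) • P y x))
    (hjac : ∀ (a b : ℕ) (x y z : A), x ∈ G a → y ∈ G b →
      P x (P y z) = P (P x y) z + ((-1 : ℝ) ^ (a * b)) • P y (P x z))
    (Ψ : A) (hΨ : Ψ ∈ G 3) :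
    ∀ X ∈ G 1, ∀ Y ∈ G 1,
      P (P X Ψ) (P Y Y) = (2 : ℝ) • P X (P (P Y Ψ) Y) ∧
      P (P (P X Ψ) Y) Y = (1 / 2 : ℝ) • P (P X Ψ) (P Y Y) := by
  intro X hX Y hY
  have hself : P (P X Ψ) (P Y Y) = (2 : ℝ) • P (P (P X Ψ) Y) Y :=
    GradedBracket.bracket_bracket_self_eq_two_smul hdeg hanti hjac (hdeg 1 3 X Ψ hX hΨ) hY
  refine ⟨?_, ?_⟩
  · rw [hself, GradedBracket.bracket_derived_self_eq_derived_bracket_self hbilL hbilR hdeg hlow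
      hanti hjac hX hY hΨ]
  · rw [hself, smul_smul]
    norm_num
end

section
/- In a ℤ-graded Poisson superalgebra 𝒜 with bracket of degree −2, let Ψ ∈ 𝒜^3 (odd) and N ∈ 𝒜^2 (even). Define X∘Y = {{X,Ψ},Y} for X, Y ∈ 𝒜^1 and N̂(X) = {N,X}. Then {{X,{Ψ,N}},Y} = N̂(X)∘Y + X∘N̂(Y) − N̂(X∘Y) for all X, Y ∈ 𝒜^1; i.e. the contracted product ∘_{N̂} is the derived bracket generated by the Hamiltonian {Ψ,N}. -/
/-!
Jacobi with the odd element `X` expands `{X,{Ψ,N}}` as `{{X,Ψ},N} − {Ψ,{X,N}}`; graded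
antisymmetry turns this into `{{N,X},Ψ} − {N,{X,Ψ}}`. Since `N` is even, `N̂ = {N,·}` is an
ordinary derivation of the bracket, so `N̂(X∘Y) = {{N,{X,Ψ}},Y} + X∘N̂(Y)`, and the term
`{{N,{X,Ψ}},Y}` cancels.
-/

section GradedBracket

variable {A : Type*} [AddCommGroup A] [Module ℝ A] {G : ℕ → Submodule ℝ A} {P : A → A → A}

def GradedAntisymm (G : ℕ → Submodule ℝ A) (P : A → A → A) : Prop :=
  ∀ (a b : ℕ) (x y : A), x ∈ G a → y ∈ G b → P x y = -(((-1 : ℝ) ^ (a * b)) • P y x)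

def GradedJacobi (G : ℕ → Submodule ℝ A) (P : A → A → A) : Prop :=
  ∀ (a b : ℕ) (x y z : A), x ∈ G a → y ∈ G b →
    P x (P y z) = P (P x y) z + ((-1 : ℝ) ^ (a * b)) • P y (P x z)

variable {a b : ℕ} {x y z : A}

theorem GradedAntisymm.eq_neg_swap_of_even (hanti : GradedAntisymm G P) (hx : x ∈ G a)
    (hy : y ∈ G b) (hab : Even (a * b)) : P x y = -P y x := by
  simpa [hab.neg_one_pow] using hanti a b x y hx hy

theorem GradedAntisymm.eq_swap_of_odd (hanti : GradedAntisymm G P) (hx : x ∈ G a)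
    (hy : y ∈ G b) (hab : Odd (a * b)) : P x y = P y x := by
  simpa [hab.neg_one_pow] using hanti a b x y hx hy

theorem GradedJacobi.eq_add_of_even (hjac : GradedJacobi G P) (hx : x ∈ G a)
    (hy : y ∈ G b) (hab : Even (a * b)) : P x (P y z) = P (P x y) z + P y (P x z) := by
  simpa [hab.neg_one_pow] using hjac a b x y z hx hy

theorem GradedJacobi.eq_sub_of_odd (hjac : GradedJacobi G P) (hx : x ∈ G a)
    (hy : y ∈ G b) (hab : Odd (a * b)) : P x (P y z) = P (P x y) z - P y (P x z) := by
  simpa [hab.neg_one_pow, sub_eq_add_neg] using hjac a b x y z hx hy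

end GradedBracket

theorem contracted_product_is_derived_bracket_general
    {A : Type*} [AddCommGroup A] [Module ℝ A]
    (G : ℕ → Submodule ℝ A)                   -- the grading 𝒜^k
    (P : A → A → A)                            -- the Poisson bracket {·,·}
    (hbilL : ∀ y : A, IsLinearMap ℝ (fun x => P x y))
    (hdeg : ∀ (a b : ℕ) (x y : A), x ∈ G a → y ∈ G b → P x y ∈ G (a + b - 2))
    (hanti : ∀ (a b : ℕ) (x y : A), x ∈ G a → y ∈ G b →
      P x y = -(((-1 : ℝ) ^ (a * b)) • P y x))
    (hjac : ∀ (a b : ℕ) (x y z : A), x ∈ G a → y ∈ G b →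
      P x (P y z) = P (P x y) z + ((-1 : ℝ) ^ (a * b)) • P y (P x z))
    (Ψ : A) (hΨ : Ψ ∈ G 3) (N : A) (hN : N ∈ G 2) :
    ∀ X ∈ G 1, ∀ Y ∈ G 1,
      P (P X (P Ψ N)) Y
        = P (P (P N X) Ψ) Y + P (P X Ψ) (P N Y) - P N (P (P X Ψ) Y) := by
  intro X hX Y hY
  have hanti : GradedAntisymm G P := hanti
  have hjac : GradedJacobi G P := hjac
  have hXΨ : P X Ψ ∈ G 2 := hdeg 1 3 X Ψ hX hΨ
  have hXN : P X N ∈ G 1 := hdeg 1 2 X N hX hN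
  have hamiltonian : P X (P Ψ N) = P (P N X) Ψ - P N (P X Ψ) := by
    rw [hjac.eq_sub_of_odd hX hΨ (by decide), hanti.eq_neg_swap_of_even hXΨ hN (by decide),
      hanti.eq_swap_of_odd hΨ hXN (by decide), hanti.eq_neg_swap_of_even hX hN (by decide),
      (hbilL Ψ).map_neg]
    abel
  have derivation : P N (P (P X Ψ) Y) = P (P N (P X Ψ)) Y + P (P X Ψ) (P N Y) :=
    hjac.eq_add_of_even hN hXΨ (by decide)
  rw [hamiltonian, (hbilL Y).map_sub, derivation]
  abel

/-- In an ℕ-graded Poisson superalgebra with bracket of degree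
`−2`, let `Ψ ∈ 𝒜³` (odd) and `N ∈ 𝒜²` (even). With `X∘Y = {{X,Ψ},Y}` and
`N̂(X) = {N,X}`, one has `{{X,{Ψ,N}},Y} = N̂(X)∘Y + X∘N̂(Y) − N̂(X∘Y)` for all
`X, Y ∈ 𝒜¹`: the contracted product `∘_N̂` is the derived bracket generated by
the Hamiltonian `{Ψ,N}`. -/
theorem contracted_product_is_derived_bracket
    {A : Type*} [AddCommGroup A] [Module ℝ A]
    (G : ℕ → Submodule ℝ A)                   -- the grading 𝒜^k
    (P : A → A → A)                            -- the Poisson bracket {·,·}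
    (hbilL : ∀ y : A, IsLinearMap ℝ (fun x => P x y))
    (hbilR : ∀ x : A, IsLinearMap ℝ (P x))
    (hdeg : ∀ (a b : ℕ) (x y : A), x ∈ G a → y ∈ G b → P x y ∈ G (a + b - 2))
    (hlow : ∀ (a b : ℕ) (x y : A), a + b < 2 → x ∈ G a → y ∈ G b → P x y = 0)
    (hanti : ∀ (a b : ℕ) (x y : A), x ∈ G a → y ∈ G b →
      P x y = -(((-1 : ℝ) ^ (a * b)) • P y x))
    (hjac : ∀ (a b : ℕ) (x y z : A), x ∈ G a → y ∈ G b →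
      P x (P y z) = P (P x y) z + ((-1 : ℝ) ^ (a * b)) • P y (P x z))
    (Ψ : A) (hΨ : Ψ ∈ G 3) (N : A) (hN : N ∈ G 2) :
    ∀ X ∈ G 1, ∀ Y ∈ G 1,
      P (P X (P Ψ N)) Y
        = P (P (P N X) Ψ) Y + P (P X Ψ) (P N Y) - P N (P (P X Ψ) Y) :=
  contracted_product_is_derived_bracket_general G P hbilL hdeg hanti hjac Ψ hΨ N hN
end

section
/- The Courant (Dorfman) bracket on sections of TM ⊕ T*M, defined by (X+ξ)∘(Y+η) = [X,Y] + (L_X η − i_Y dξ), satisfies the Leibniz Jacobi identity: (u∘v)∘w = u∘(v∘w) − v∘(u∘w) for all sections u, v, w. -/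
/-!
The vector-field component of the identity is the Jacobi identity of the Lie bracket. For the
form component, `d (L_X η - i_Y dξ) = L_X dη - L_Y dξ` because `d` commutes with `L_X` and
`d i_Y dξ = L_Y dξ` (as `d² = 0`); the remaining terms then match by
`[L_X, L_Y] = L_{[X,Y]}` and `[L_X, i_Z] = i_{[X,Z]}`.
-/

theorem map_sub_of_map_add {A B : Type*} [AddGroup A] [AddGroup B] (f : A → B)
    (hf : ∀ a b, f (a + b) = f a + f b) (a b : A) : f (a - b) = f a - f b :=
  (AddMonoidHom.mk' f hf).map_sub a b

section Dorfman

variable {Xv Ω1 Ω2 : Type*} [AddCommGroup Ω1] [AddCommGroup Ω2]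
  (L1 : Xv → Ω1 → Ω1) (L2 : Xv → Ω2 → Ω2) (d1 : Ω1 → Ω2) (i1 : Xv → Ω2 → Ω1)

theorem d1_dorfman_form (d1_add : ∀ a b, d1 (a + b) = d1 a + d1 b)
    (cartan2_exact : ∀ X ω, L2 X (d1 ω) = d1 (i1 X (d1 ω)))
    (dL_comm : ∀ X ω, d1 (L1 X ω) = L2 X (d1 ω)) (X Y : Xv) (ξ η : Ω1) :
    d1 (L1 X η - i1 Y (d1 ξ)) = L2 X (d1 η) - L2 Y (d1 ξ) := by
  rw [map_sub_of_map_add d1 d1_add, dL_comm, ← cartan2_exact]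

variable [LieRing Xv]

def dorfman (u v : Xv × Ω1) : Xv × Ω1 :=
  (⁅u.1, v.1⁆, L1 u.1 v.2 - i1 v.1 (d1 u.2))

theorem dorfman_form_leibniz (L1_add : ∀ X a b, L1 X (a + b) = L1 X a + L1 X b)
    (i1_add : ∀ X a b, i1 X (a + b) = i1 X a + i1 X b)
    (d1_add : ∀ a b, d1 (a + b) = d1 a + d1 b)
    (cartan2_exact : ∀ X ω, L2 X (d1 ω) = d1 (i1 X (d1 ω)))
    (dL_comm : ∀ X ω, d1 (L1 X ω) = L2 X (d1 ω))
    (LL : ∀ X Y ω, L1 X (L1 Y ω) - L1 Y (L1 X ω) = L1 ⁅X, Y⁆ ω)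
    (Li : ∀ X Z β, L1 X (i1 Z β) - i1 Z (L2 X β) = i1 ⁅X, Z⁆ β)
    (X Y Z : Xv) (ξ η ζ : Ω1) :
    L1 ⁅X, Y⁆ ζ - i1 Z (d1 (L1 X η - i1 Y (d1 ξ))) =
      (L1 X (L1 Y ζ - i1 Z (d1 η)) - i1 ⁅Y, Z⁆ (d1 ξ)) -
        (L1 Y (L1 X ζ - i1 Z (d1 ξ)) - i1 ⁅X, Z⁆ (d1 η)) := by
  rw [d1_dorfman_form L1 L2 d1 i1 d1_add cartan2_exact dL_comm, map_sub_of_map_add _ (i1_add Z),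
    ← LL, ← Li X Z, ← Li Y Z, map_sub_of_map_add _ (L1_add X), map_sub_of_map_add _ (L1_add Y)]
  abel

theorem dorfman_leibniz (L1_add : ∀ X a b, L1 X (a + b) = L1 X a + L1 X b)
    (i1_add : ∀ X a b, i1 X (a + b) = i1 X a + i1 X b)
    (d1_add : ∀ a b, d1 (a + b) = d1 a + d1 b)
    (cartan2_exact : ∀ X ω, L2 X (d1 ω) = d1 (i1 X (d1 ω)))
    (dL_comm : ∀ X ω, d1 (L1 X ω) = L2 X (d1 ω))
    (LL : ∀ X Y ω, L1 X (L1 Y ω) - L1 Y (L1 X ω) = L1 ⁅X, Y⁆ ω)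
    (Li : ∀ X Z β, L1 X (i1 Z β) - i1 Z (L2 X β) = i1 ⁅X, Z⁆ β) (u v w : Xv × Ω1) :
    dorfman L1 d1 i1 (dorfman L1 d1 i1 u v) w =
      dorfman L1 d1 i1 u (dorfman L1 d1 i1 v w) - dorfman L1 d1 i1 v (dorfman L1 d1 i1 u w) :=
  Prod.ext (lie_lie u.1 v.1 w.1)
    (dorfman_form_leibniz L1 L2 d1 i1 L1_add i1_add d1_add cartan2_exact dL_comm LL Li
      u.1 v.1 w.1 u.2 v.2 w.2)

end Dorfman

theorem dorfman_leibniz_jacobi_general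
    {Xv Ω1 Ω2 : Type*} [LieRing Xv]
    [AddCommGroup Ω1] [AddCommGroup Ω2]
    (L1 : Xv → Ω1 → Ω1) (L2 : Xv → Ω2 → Ω2)
    (d1 : Ω1 → Ω2) (i1 : Xv → Ω2 → Ω1)
    -- additivity of the operations
    (L1_add : ∀ X a b, L1 X (a + b) = L1 X a + L1 X b)
    (i1_add : ∀ X a b, i1 X (a + b) = i1 X a + i1 X b)
    (d1_add : ∀ a b, d1 (a + b) = d1 a + d1 b)
    -- standard Cartan calculus identities
    (cartan2_exact : ∀ X ω, L2 X (d1 ω) = d1 (i1 X (d1 ω)))  -- L_X = i_X d + d i_X with d² = 0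
    (dL_comm : ∀ X ω, d1 (L1 X ω) = L2 X (d1 ω))
    (LL : ∀ X Y ω, L1 X (L1 Y ω) - L1 Y (L1 X ω) = L1 ⁅X, Y⁆ ω)
    (Li : ∀ X Z β, L1 X (i1 Z β) - i1 Z (L2 X β) = i1 ⁅X, Z⁆ β)
    -- the Dorfman bracket on sections of TM ⊕ T*M
    (dorf : Xv × Ω1 → Xv × Ω1 → Xv × Ω1)
    (hdorf : ∀ u v, dorf u v = (⁅u.1, v.1⁆, L1 u.1 v.2 - i1 v.1 (d1 u.2))) :
    ∀ u v w : Xv × Ω1,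
      dorf (dorf u v) w = dorf u (dorf v w) - dorf v (dorf u w) := by
  obtain rfl : dorf = dorfman L1 d1 i1 := funext fun u => funext (hdorf u)
  exact dorfman_leibniz L1 L2 d1 i1 L1_add i1_add d1_add cartan2_exact dL_comm LL Li

/-- The Courant (Dorfman) bracket
`(X+ξ)∘(Y+η) = [X,Y] + (L_X η − i_Y dξ)` on sections of `TM ⊕ T*M` satisfies
the Leibniz Jacobi identity `(u∘v)∘w = u∘(v∘w) − v∘(u∘w)`.

Formalized abstractly via Cartan calculus: `C` plays the role of smooth
functions, `Xv` of vector fields (a Lie algebra), `Ω1` and `Ω2` of 1- and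
2-forms, with Lie derivatives `L1, L2`, differentials `d0, d1`, contractions
`i0, i1` and the action `act` of vector fields on functions, subject to the
standard Cartan calculus identities. -/
theorem dorfman_leibniz_jacobi
    {C Xv Ω1 Ω2 : Type*} [AddCommGroup C] [LieRing Xv]
    [AddCommGroup Ω1] [AddCommGroup Ω2]
    (act : Xv → C → C) (L1 : Xv → Ω1 → Ω1) (L2 : Xv → Ω2 → Ω2)
    (d0 : C → Ω1) (d1 : Ω1 → Ω2) (i0 : Xv → Ω1 → C) (i1 : Xv → Ω2 → Ω1)
    -- additivity of the operations
    (L1_add : ∀ X a b, L1 X (a + b) = L1 X a + L1 X b)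
    (i1_add : ∀ X a b, i1 X (a + b) = i1 X a + i1 X b)
    (i0_add : ∀ X a b, i0 X (a + b) = i0 X a + i0 X b)
    (d1_add : ∀ a b, d1 (a + b) = d1 a + d1 b)
    -- standard Cartan calculus identities
    (cartan1 : ∀ X ω, L1 X ω = i1 X (d1 ω) + d0 (i0 X ω))
    (cartan2_exact : ∀ X ω, L2 X (d1 ω) = d1 (i1 X (d1 ω)))  -- L_X = i_X d + d i_X with d² = 0
    (dL_comm : ∀ X ω, d1 (L1 X ω) = L2 X (d1 ω))
    (LL : ∀ X Y ω, L1 X (L1 Y ω) - L1 Y (L1 X ω) = L1 ⁅X, Y⁆ ω)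
    (Li : ∀ X Z β, L1 X (i1 Z β) - i1 Z (L2 X β) = i1 ⁅X, Z⁆ β)
    -- the Dorfman bracket on sections of TM ⊕ T*M
    (dorf : Xv × Ω1 → Xv × Ω1 → Xv × Ω1)
    (hdorf : ∀ u v, dorf u v = (⁅u.1, v.1⁆, L1 u.1 v.2 - i1 v.1 (d1 u.2))) :
    ∀ u v w : Xv × Ω1,
      dorf (dorf u v) w = dorf u (dorf v w) - dorf v (dorf u w) :=
  dorfman_leibniz_jacobi_general L1 L2 d1 i1 L1_add i1_add d1_add cartan2_exact dL_comm LL Li dorf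
    hdorf
end

section
/- Let Δ be an ℝ-linear endomorphism of the sections of TM ⊕ T*M over M = ℝⁿ that is C∞(M)-linear (a (1,1)-tensor) and commutes with all left Dorfman multiplications: u∘Δw = Δ(u∘w) for all sections u, w, and satisfies Δ(v∘v) = Δv∘v for all v. Then Δ = λ·Id for some λ ∈ ℝ (i.e. the canonical Courant algebroid on 𝒯M = TM ⊕ T*M is irreducible). -/
open scoped BigOperators

noncomputable section

/-- The `j`-th partial derivative of `f : ℝⁿ → ℝ` at `x`. -/
def pd (n : ℕ) (j : Fin n) (f : (Fin n → ℝ) → ℝ) (x : Fin n → ℝ) : ℝ :=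
  fderiv ℝ f x (Pi.single j 1)

/-- Sections of `TM ⊕ T*M` over `M = ℝⁿ`, in the trivialization given by the
coordinates: a pair (vector field components, 1-form components). -/
abbrev Sec (n : ℕ) :=
  ((Fin n → ℝ) → (Fin n → ℝ)) × ((Fin n → ℝ) → (Fin n → ℝ))

/-- The Lie bracket `[X,Y]` of vector fields on `ℝⁿ` in coordinates. -/
def lieVF {n : ℕ} (X Y : (Fin n → ℝ) → (Fin n → ℝ)) :
    (Fin n → ℝ) → (Fin n → ℝ) := fun x i =>
  ∑ j, (X x j * pd n j (fun y => Y y i) x - Y x j * pd n j (fun y => X y i) x)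

/-- The Lie derivative `L_X η` of a 1-form on `ℝⁿ` in coordinates. -/
def lieD {n : ℕ} (X η : (Fin n → ℝ) → (Fin n → ℝ)) :
    (Fin n → ℝ) → (Fin n → ℝ) := fun x i =>
  ∑ j, (X x j * pd n j (fun y => η y i) x + η x j * pd n i (fun y => X y j) x)

/-- The contraction `i_Y dξ` on `ℝⁿ` in coordinates. -/
def iotaD {n : ℕ} (Y ξ : (Fin n → ℝ) → (Fin n → ℝ)) :
    (Fin n → ℝ) → (Fin n → ℝ) := fun x i =>
  ∑ j, Y x j * (pd n j (fun y => ξ y i) x - pd n i (fun y => ξ y j) x)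

/-- The Dorfman bracket `(X+ξ)∘(Y+η) = [X,Y] + (L_X η − i_Y dξ)`. -/
def dorf {n : ℕ} (u v : Sec n) : Sec n :=
  (lieVF u.1 v.1, lieD u.1 v.2 - iotaD v.1 u.2)

/-- A section is smooth if both components are `C^∞`. -/
def IsSmoothSec {n : ℕ} (u : Sec n) : Prop :=
  ContDiff ℝ (⊤ : ℕ∞) u.1 ∧ ContDiff ℝ (⊤ : ℕ∞) u.2

/-- Multiplication of a section by a function. -/
def fmul {n : ℕ} (f : (Fin n → ℝ) → ℝ) (u : Sec n) : Sec n :=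
  (fun x => f x • u.1 x, fun x => f x • u.2 x)

section Aux
open scoped BigOperators

lemma pd_const (n : ℕ) (j : Fin n) (x : Fin n → ℝ) (c : ℝ) :
    pd n j (fun _ => c) x = 0 := by
  simp [pd]

lemma pd_coord_mul (n : ℕ) (j k : Fin n) (x : Fin n → ℝ) (c : ℝ) :
    pd n j (fun y => y k * c) x = (if k = j then c else 0) := by
  have h : (fun y : Fin n → ℝ => y k * c)
      = ⇑((ContinuousLinearMap.proj k : (Fin n → ℝ) →L[ℝ] ℝ).smulRight c) := by
    funext y; simp [ContinuousLinearMap.smulRight_apply, smul_eq_mul]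
  rw [pd, h, ContinuousLinearMap.fderiv]
  simp [ContinuousLinearMap.smulRight_apply, Pi.single_apply]

lemma pd_coord (n : ℕ) (j k : Fin n) (x : Fin n → ℝ) :
    pd n j (fun y => y k) x = (if k = j then 1 else 0) := by
  have := pd_coord_mul n j k x 1
  simpa using this

lemma pd_coord_ite (n : ℕ) (j k : Fin n) (x : Fin n → ℝ) (p : Prop) [Decidable p] :
    pd n j (fun y => if p then y k else 0) x
      = if p then (if k = j then 1 else 0) else 0 := by
  by_cases h : p <;> simp [h, pd_coord, pd_const]

lemma pd_coord_ite_mul (n : ℕ) (j k : Fin n) (x : Fin n → ℝ) (p : Prop) [Decidable p] (c : ℝ) :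
    pd n j (fun y => if p then y k * c else 0) x
      = if p then (if k = j then c else 0) else 0 := by
  by_cases h : p <;> simp [h, pd_coord_mul, pd_const]

lemma pd_mul_coord (n : ℕ) (j k : Fin n) (x : Fin n → ℝ) (c : ℝ) :
    pd n j (fun y => c * y k) x = (if k = j then c else 0) := by
  have h : (fun y : Fin n → ℝ => c * y k) = fun y => y k * c := by
    funext y; ring
  rw [h, pd_coord_mul]

lemma pd_mul_coord_ite (n : ℕ) (j k : Fin n) (x : Fin n → ℝ) (p : Prop) [Decidable p] (c : ℝ) :
    pd n j (fun y => if p then c * y k else 0) x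
      = if p then (if k = j then c else 0) else 0 := by
  by_cases h : p <;> simp [h, pd_mul_coord, pd_const]

lemma const_of_pd_zero {n : ℕ} {g : (Fin n → ℝ) → ℝ} (hg : Differentiable ℝ g)
    (h : ∀ (k : Fin n) (x : Fin n → ℝ), pd n k g x = 0) (x y : Fin n → ℝ) : g x = g y := by
  apply is_const_of_fderiv_eq_zero hg
  intro z
  have hv : ∀ v : Fin n → ℝ, fderiv ℝ g z v = 0 := by
    intro v
    have hv2 : v = ∑ kk, v kk • (Pi.single kk (1:ℝ) : Fin n → ℝ) := by
      funext i
      simp [Finset.sum_apply, Pi.single_apply, mul_ite, Finset.sum_ite_eq, Finset.sum_ite_eq']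
    rw [hv2, map_sum]
    refine Finset.sum_eq_zero fun kk _ => ?_
    have hk := h kk z
    rw [map_smul]
    simp only [pd] at hk
    simp [hk]
  exact ContinuousLinearMap.ext fun v => by rw [hv v]; simp

variable {n : ℕ}

/-- the constant vector field `∂ⱼ`. -/
def secE (j : Fin n) : Sec n := (fun _ => (Pi.single j 1 : Fin n → ℝ), fun _ => 0)
/-- the constant 1-form `dxʲ`. -/
def secF (j : Fin n) : Sec n := (fun _ => 0, fun _ => (Pi.single j 1 : Fin n → ℝ))
/-- the vector field `xᵏ ∂ₘ`. -/
def secU (k m : Fin n) : Sec n := (fun x => x k • (Pi.single m 1 : Fin n → ℝ), fun _ => 0)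
/-- the section `∂ⱼ + xʲ dxʲ`. -/
def secV (j : Fin n) : Sec n :=
  (fun _ => (Pi.single j 1 : Fin n → ℝ), fun x => x j • (Pi.single j 1 : Fin n → ℝ))

lemma dorf_E_left (k : Fin n) (W : Sec n) :
    dorf (secE k) W = (fun x i => pd n k (fun y => W.1 y i) x,
                       fun x i => pd n k (fun y => W.2 y i) x) := by
  unfold dorf secE lieVF lieD iotaD
  refine Prod.ext ?_ ?_ <;> funext x i <;>
    simp [pd_const, Pi.single_apply, mul_ite, ite_mul, Finset.sum_ite_eq, Finset.sum_ite_eq']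

lemma dorf_U_const (k m : Fin n) (a b : Fin n → ℝ) :
    dorf (secU k m) ((fun _ => a, fun _ => b) : Sec n)
      = (fun _ => (-(a k)) • (Pi.single m 1 : Fin n → ℝ),
         fun _ => (b m) • (Pi.single k 1 : Fin n → ℝ)) := by
  unfold dorf secU lieVF lieD iotaD
  refine Prod.ext ?_ ?_ <;> funext x i <;>
    simp [pd_const, pd_coord_ite, Pi.single_apply, mul_ite, ite_mul,
      Finset.sum_ite_eq, Finset.sum_ite_eq', mul_comm] <;> split_ifs <;> simp_all

lemma dorf_E_E (k j : Fin n) : dorf (secE k) (secE (n := n) j) = 0 := by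
  rw [dorf_E_left]
  refine Prod.ext ?_ ?_ <;> funext x i <;> simp [secE, pd_const]

lemma dorf_E_F (k j : Fin n) : dorf (secE k) (secF (n := n) j) = 0 := by
  rw [dorf_E_left]
  refine Prod.ext ?_ ?_ <;> funext x i <;> simp [secF, pd_const]

lemma dorf_U_E (k m j : Fin n) :
    dorf (secU k m) (secE j) = (-((Pi.single j 1 : Fin n → ℝ) k)) • secE m := by
  unfold secE
  rw [dorf_U_const]
  refine Prod.ext ?_ ?_ <;> funext x <;> simp

lemma dorf_U_F (k m j : Fin n) :
    dorf (secU k m) (secF j) = (((Pi.single j 1 : Fin n → ℝ) m)) • secF k := by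
  unfold secF
  rw [dorf_U_const]
  refine Prod.ext ?_ ?_ <;> funext x <;> simp

lemma dorf_V_V (j : Fin n) : dorf (secV j) (secV j) = secF j := by
  unfold dorf secV secF lieVF lieD iotaD
  refine Prod.ext ?_ ?_ <;> funext x i <;>
    simp [pd_const, pd_coord_ite, pd_mul_coord_ite, pd_coord_ite_mul, Pi.single_apply,
      mul_ite, ite_mul, Finset.sum_ite_eq, Finset.sum_ite_eq'] <;> split_ifs <;> simp_all

lemma dorf_P_V (j : Fin n) (lam mu : ℝ) :
    dorf ((fun _ => lam • (Pi.single j 1 : Fin n → ℝ),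
           fun x => (mu * x j) • (Pi.single j 1 : Fin n → ℝ)) : Sec n) (secV j)
      = ((fun _ => 0, fun _ => lam • (Pi.single j 1 : Fin n → ℝ)) : Sec n) := by
  unfold dorf secV lieVF lieD iotaD
  refine Prod.ext ?_ ?_ <;> funext x i <;>
    simp [pd_const, pd_coord_ite, pd_mul_coord_ite, pd_coord_ite_mul, Pi.single_apply,
      mul_ite, ite_mul, Finset.sum_ite_eq, Finset.sum_ite_eq'] <;> split_ifs <;> simp_all

lemma smooth_secE (j : Fin n) : IsSmoothSec (secE (n := n) j) :=
  ⟨contDiff_const, contDiff_const⟩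

lemma smooth_secF (j : Fin n) : IsSmoothSec (secF (n := n) j) :=
  ⟨contDiff_const, contDiff_const⟩

lemma smooth_secU (k m : Fin n) : IsSmoothSec (secU (n := n) k m) :=
  ⟨((ContinuousLinearMap.proj k : (Fin n → ℝ) →L[ℝ] ℝ)).contDiff.smul contDiff_const,
   contDiff_const⟩

lemma smooth_secV (j : Fin n) : IsSmoothSec (secV (n := n) j) :=
  ⟨contDiff_const,
   ((ContinuousLinearMap.proj j : (Fin n → ℝ) →L[ℝ] ℝ)).contDiff.smul contDiff_const⟩

lemma smooth_coord (j : Fin n) : ContDiff ℝ (⊤ : ℕ∞) (fun x : Fin n → ℝ => x j) :=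
  ((ContinuousLinearMap.proj j : (Fin n → ℝ) →L[ℝ] ℝ)).contDiff

end Aux

/-- The canonical Courant algebroid on `𝒯M = TM ⊕ T*M` over
`M = ℝⁿ` is irreducible: any `ℝ`-linear, `C^∞(M)`-linear endomorphism `Δ` of
the (smooth) sections of `TM ⊕ T*M` that commutes with all left Dorfman
multiplications, `u∘Δw = Δ(u∘w)`, and satisfies `Δ(v∘v) = Δv∘v`, is `λ·Id`
for some `λ ∈ ℝ`. -/
theorem canonical_courant_irreducible (n : ℕ) (Δ : Sec n → Sec n)
    (hadd : ∀ u v : Sec n, Δ (u + v) = Δ u + Δ v)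
    (hsmul : ∀ (c : ℝ) (u : Sec n), Δ (c • u) = c • Δ u)
    (hCinf : ∀ f : (Fin n → ℝ) → ℝ, ContDiff ℝ (⊤ : ℕ∞) f →
      ∀ u : Sec n, IsSmoothSec u → Δ (fmul f u) = fmul f (Δ u))
    (hsmooth : ∀ u : Sec n, IsSmoothSec u → IsSmoothSec (Δ u))
    (hcomm : ∀ u w : Sec n, IsSmoothSec u → IsSmoothSec w →
      dorf u (Δ w) = Δ (dorf u w))
    (hsq : ∀ v : Sec n, IsSmoothSec v → Δ (dorf v v) = dorf (Δ v) v) :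
    ∃ lam : ℝ, ∀ u : Sec n, IsSmoothSec u → Δ u = lam • u := by
  rcases Nat.eq_zero_or_pos n with hn | hn
  · subst hn
    exact ⟨0, fun u _ => Subsingleton.elim _ _⟩
  have j0 : Fin n := ⟨0, hn⟩
  have h0 : Δ 0 = 0 := by simpa using hsmul 0 0
  -- Step A: constancy of Δ on sections annihilated by all ∂ₖ
  have hconst : ∀ G : Sec n, IsSmoothSec G → (∀ k, dorf (secE k) G = 0) →
      Δ G = (fun _ => (Δ G).1 0, fun _ => (Δ G).2 0) := by
    intro G hG hdG
    have hsm := hsmooth G hG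
    have hd : ∀ k, dorf (secE k) (Δ G) = 0 := by
      intro k
      rw [hcomm (secE k) G (smooth_secE k) hG, hdG k, h0]
    have hpd1 : ∀ (k : Fin n) (x : Fin n → ℝ) (i : Fin n),
        pd n k (fun y => (Δ G).1 y i) x = 0 := by
      intro k x i
      have h := (dorf_E_left k (Δ G)).symm.trans (hd k)
      have := congrFun (congrFun (congrArg Prod.fst h) x) i
      simpa using this
    have hpd2 : ∀ (k : Fin n) (x : Fin n → ℝ) (i : Fin n),
        pd n k (fun y => (Δ G).2 y i) x = 0 := by
      intro k x i
      have h := (dorf_E_left k (Δ G)).symm.trans (hd k)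
      have := congrFun (congrFun (congrArg Prod.snd h) x) i
      simpa using this
    refine Prod.ext ?_ ?_ <;> funext x i
    · exact const_of_pd_zero ((contDiff_pi.mp hsm.1 i).differentiable (by simp))
        (fun k x => hpd1 k x i) x 0
    · exact const_of_pd_zero ((contDiff_pi.mp hsm.2 i).differentiable (by simp))
        (fun k x => hpd2 k x i) x 0
  set a : Fin n → Fin n → ℝ := fun j => (Δ (secE j)).1 0 with ha
  set b : Fin n → Fin n → ℝ := fun j => (Δ (secE j)).2 0 with hb
  set c : Fin n → Fin n → ℝ := fun j => (Δ (secF j)).1 0 with hcdef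
  set d : Fin n → Fin n → ℝ := fun j => (Δ (secF j)).2 0 with hddef
  have hEconst : ∀ j, Δ (secE j) = ((fun _ => a j, fun _ => b j) : Sec n) :=
    fun j => hconst _ (smooth_secE j) (fun k => dorf_E_E k j)
  have hFconst : ∀ j, Δ (secF j) = ((fun _ => c j, fun _ => d j) : Sec n) :=
    fun j => hconst _ (smooth_secF j) (fun k => dorf_E_F k j)
  -- Step B: key equations
  have keyE : ∀ j k m : Fin n,
      ((fun _ => (-(a j k)) • (Pi.single m 1 : Fin n → ℝ),
        fun _ => (b j m) • (Pi.single k 1 : Fin n → ℝ)) : Sec n)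
        = (-((Pi.single j 1 : Fin n → ℝ) k)) • ((fun _ => a m, fun _ => b m) : Sec n) := by
    intro j k m
    have h1 := hcomm (secU k m) (secE j) (smooth_secU k m) (smooth_secE j)
    rw [hEconst j, dorf_U_const, dorf_U_E, hsmul, hEconst m] at h1
    exact h1
  have keyF : ∀ j k m : Fin n,
      ((fun _ => (-(c j k)) • (Pi.single m 1 : Fin n → ℝ),
        fun _ => (d j m) • (Pi.single k 1 : Fin n → ℝ)) : Sec n)
        = (((Pi.single j 1 : Fin n → ℝ) m)) • ((fun _ => c k, fun _ => d k) : Sec n) := by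
    intro j k m
    have h1 := hcomm (secU k m) (secF j) (smooth_secU k m) (smooth_secF j)
    rw [hFconst j, dorf_U_const, dorf_U_F, hsmul, hFconst k] at h1
    exact h1
  -- pointwise versions
  have keyE1 : ∀ j k m i : Fin n,
      -(a j k) * (Pi.single m 1 : Fin n → ℝ) i
        = -((Pi.single j 1 : Fin n → ℝ) k) * a m i := by
    intro j k m i
    have := congrFun (congrFun (congrArg Prod.fst (keyE j k m)) 0) i
    simpa [smul_eq_mul] using this
  have keyE2 : ∀ j k m i : Fin n,
      (b j m) * (Pi.single k 1 : Fin n → ℝ) i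
        = -((Pi.single j 1 : Fin n → ℝ) k) * b m i := by
    intro j k m i
    have := congrFun (congrFun (congrArg Prod.snd (keyE j k m)) 0) i
    simpa [smul_eq_mul] using this
  have keyF1 : ∀ j k m i : Fin n,
      -(c j k) * (Pi.single m 1 : Fin n → ℝ) i
        = ((Pi.single j 1 : Fin n → ℝ) m) * c k i := by
    intro j k m i
    have := congrFun (congrFun (congrArg Prod.fst (keyF j k m)) 0) i
    simpa [smul_eq_mul] using this
  have keyF2 : ∀ j k m i : Fin n,
      (d j m) * (Pi.single k 1 : Fin n → ℝ) i
        = ((Pi.single j 1 : Fin n → ℝ) m) * d k i := by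
    intro j k m i
    have := congrFun (congrFun (congrArg Prod.snd (keyF j k m)) 0) i
    simpa [smul_eq_mul] using this
  set lam : ℝ := a j0 j0 with hlam
  set mu : ℝ := d j0 j0 with hmu
  -- solve the equations
  have haj : ∀ m i : Fin n, a m i = lam * (Pi.single m 1 : Fin n → ℝ) i := by
    intro m i
    have h := keyE1 j0 j0 m i
    rw [Pi.single_eq_same, neg_mul, neg_mul, neg_inj, one_mul] at h
    exact h.symm
  have hbj : ∀ j m : Fin n, b j m = 0 := by
    intro j m
    by_cases hall : ∀ i : Fin n, i = j
    · have hm : m = j := hall m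
      subst hm
      have h := keyE2 m m m m
      rw [Pi.single_eq_same, mul_one, neg_mul, one_mul] at h
      linarith
    · push_neg at hall
      obtain ⟨i, hi⟩ := hall
      have h := keyE2 j i m i
      rw [Pi.single_eq_same, mul_one, Pi.single_eq_of_ne hi] at h
      simpa using h
  have hcj : ∀ j k : Fin n, c j k = 0 := by
    intro j k
    by_cases hall : ∀ i : Fin n, i = j
    · have hk : k = j := hall k
      subst hk
      have h := keyF1 k k k k
      rw [Pi.single_eq_same, mul_one, one_mul] at h
      linarith
    · push_neg at hall
      obtain ⟨i, hi⟩ := hall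
      have h := keyF1 j k i i
      rw [Pi.single_eq_same, mul_one, Pi.single_eq_of_ne hi] at h
      simpa using h
  have hdj : ∀ j m : Fin n, d j m = mu * (Pi.single j 1 : Fin n → ℝ) m := by
    intro j m
    have h := keyF2 j j0 m j0
    rw [Pi.single_eq_same, mul_one] at h
    rw [h, mul_comm]
  -- section-level formulas
  have hΔE : ∀ j, Δ (secE j) = lam • secE j := by
    intro j
    rw [hEconst j]
    refine Prod.ext ?_ ?_ <;> funext x i
    · simpa [secE, smul_eq_mul] using haj j i
    · simp [secE, hbj j i]
  have hΔF : ∀ j, Δ (secF j) = mu • secF j := by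
    intro j
    rw [hFconst j]
    refine Prod.ext ?_ ?_ <;> funext x i
    · simp [secF, hcj j i]
    · simpa [secF, smul_eq_mul] using hdj j i
  -- Step C: lam = mu
  have hVsum : secV j0 = secE j0 + fmul (fun x => x j0) (secF j0) := by
    refine Prod.ext ?_ ?_ <;> funext x <;> simp [secV, secE, secF, fmul]
  have hΔV : Δ (secV j0)
      = ((fun _ => lam • (Pi.single j0 1 : Fin n → ℝ),
          fun x => (mu * x j0) • (Pi.single j0 1 : Fin n → ℝ)) : Sec n) := by
    rw [hVsum, hadd, hCinf _ (smooth_coord j0) _ (smooth_secF j0), hΔF j0, hΔE j0]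
    refine Prod.ext ?_ ?_ <;> funext x i <;>
      simp [secE, secF, fmul, smul_eq_mul] <;> ring
  have hmueq : mu = lam := by
    have hsqj := hsq (secV j0) (smooth_secV j0)
    rw [dorf_V_V, hΔV, dorf_P_V, hΔF j0] at hsqj
    have := congrFun (congrFun (congrArg Prod.snd hsqj) 0) j0
    simpa [secF, smul_eq_mul, Pi.single_eq_same] using this
  -- Step D: reconstruction
  refine ⟨lam, fun u hu => ?_⟩
  have hrep : u = (∑ j, fmul (fun x => u.1 x j) (secE j))
      + (∑ j, fmul (fun x => u.2 x j) (secF j)) := by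
    refine Prod.ext ?_ ?_ <;> funext x i <;>
      simp [fmul, secE, secF, Finset.sum_apply, Pi.single_apply, mul_ite,
        Finset.sum_ite_eq, Finset.sum_ite_eq', Prod.fst_sum, Prod.snd_sum]
  have hDsum : ∀ g : Fin n → Sec n, Δ (∑ j, g j) = ∑ j, Δ (g j) := by
    intro g
    exact map_sum (AddMonoidHom.mk' Δ hadd) g Finset.univ
  have hterm1 : ∀ j : Fin n,
      Δ (fmul (fun x => u.1 x j) (secE j)) = lam • fmul (fun x => u.1 x j) (secE j) := by
    intro j
    rw [hCinf _ (contDiff_pi.mp hu.1 j) _ (smooth_secE j), hΔE j]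
    refine Prod.ext ?_ ?_ <;> funext x i <;> simp [fmul, secE, smul_eq_mul] <;> ring
  have hterm2 : ∀ j : Fin n,
      Δ (fmul (fun x => u.2 x j) (secF j)) = lam • fmul (fun x => u.2 x j) (secF j) := by
    intro j
    rw [hCinf _ (contDiff_pi.mp hu.2 j) _ (smooth_secF j), hΔF j, hmueq]
    refine Prod.ext ?_ ?_ <;> funext x i <;> simp [fmul, secF, smul_eq_mul] <;> ring
  have hfin : Δ u = lam • ((∑ j, fmul (fun x => u.1 x j) (secE j))
      + (∑ j, fmul (fun x => u.2 x j) (secF j))) := by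
    conv_lhs => rw [hrep]
    rw [hadd, hDsum, hDsum]
    simp only [hterm1, hterm2]
    rw [smul_add, Finset.smul_sum, Finset.smul_sum]
  rw [hfin, ← hrep]

end
end
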